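/- arXiv:math/0412028 — 7 statements merged into one kernel-verified Lean document; each statement's English description precedes it below -/
import Mathlib

section
/- For every positive integer d, every v ∈ {0,1}^d with v ≠ 0, and every c ∈ ℝ^d, the maximum of the linear function x ↦ c·x over the revlex-initial 0/1-polytope P(v) equals max over q ∈ {1,…,s(v)} of ( Σ_{p=1}^{q−1} c_{sig_p(v)} + Σ_{i=0}^{sig_q(v)−1} max(c_i, 0) ). -/
open Finset

/-- The set of 0/1-vectors in ℝ^d. -/
def ZeroOne (d : ℕ) : Set (Fin d → ℝ) := {x | ∀ i, x i = 0 ∨ x i = 1}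

/-- `x` is reverse-lexicographically smaller than `y`:
there is an index `m` with `x m < y m` and `x i = y i` for all `i > m`
(equivalently, `x m < y m` for `m` the largest index where `x` and `y` differ). -/
def RlexLt {d : ℕ} (x y : Fin d → ℝ) : Prop :=
  ∃ m : Fin d, x m < y m ∧ ∀ i : Fin d, m < i → x i = y i

/-- `X(v)`: the 0/1-points revlex-smaller than `v`. -/
def Xset {d : ℕ} (v : Fin d → ℝ) : Set (Fin d → ℝ) :=
  {x | x ∈ ZeroOne d ∧ RlexLt x v}

/-- The revlex-initial 0/1-polytope `P(v) = conv X(v)`. -/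
noncomputable def Pset {d : ℕ} (v : Fin d → ℝ) : Set (Fin d → ℝ) :=
  convexHull ℝ (Xset v)

/-- `Sig(v)`: the support of `v` (the indices of its one-entries). -/
noncomputable def Sig {d : ℕ} (v : Fin d → ℝ) : Finset (Fin d) :=
  @Finset.filter (Fin d) (fun i => v i = 1) (Classical.decPred _) Finset.univ

/-- `Sig_{>i}(v)`: the elements of `Sig(v)` above `i`. -/
noncomputable def SigGt {d : ℕ} (v : Fin d → ℝ) (i : Fin d) : Finset (Fin d) :=
  (Sig v).filter (fun j => i < j)

/-- The dimension of the affine hull of a set in ℝ^d. -/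
noncomputable def adim {d : ℕ} (s : Set (Fin d → ℝ)) : ℕ :=
  Module.finrank ℝ (affineSpan ℝ s).direction

/-- A face of a polytope: a convex extreme subset. -/
def IsFaceOf {d : ℕ} (P F : Set (Fin d → ℝ)) : Prop :=
  Convex ℝ F ∧ IsExtreme ℝ P F

/-- The number of indices satisfying a predicate. -/
noncomputable def cnt {d : ℕ} (p : Fin d → Prop) : ℕ :=
  (@Finset.filter (Fin d) p (Classical.decPred _) Finset.univ).card

/-!
If `m` is the largest index at which a point `x ∈ X(v)` differs from `v`, then `x` agrees
with `v` above `m`, has `x m = 0 < 1 = v m`, and is arbitrary in `{0,1}` below `m`. Hence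
`c·x ≤ Σ_{j ∈ Sig v, j > m} c_j + Σ_{i < m} max(c_i, 0)`, with equality for the point that takes
`v` above `m`, `0` at `m` and the sign pattern of `c` below `m`. Maximising over `m ∈ Sig v`
bounds the linear function on `X(v)`, hence on its convex hull, and the bound is attained;
enumerating `Sig v` decreasingly as `sig_1 > … > sig_s` turns `{j ∈ Sig v | j > sig_q}` into
`{sig_1, …, sig_{q-1}}`.
-/

section RevlexPolytope

variable {d : ℕ} {v : Fin d → ℝ}

noncomputable def rlexBound (v c : Fin d → ℝ) (m : Fin d) : ℝ :=
  ∑ j ∈ SigGt v m, c j + ∑ i ∈ univ.filter (· < m), max (c i) 0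

theorem sig_nonempty_of_ne_zero (hv : v ∈ ZeroOne d) (hv0 : v ≠ 0) : (Sig v).Nonempty := by
  by_contra hempty
  refine hv0 (funext fun i => (hv i).resolve_right fun hi => hempty ⟨i, ?_⟩)
  simp [Sig, hi]

theorem sum_mul_eq_of_eqOn_Ioi (hv : v ∈ ZeroOne d) (c x : Fin d → ℝ) {m : Fin d}
    (hxm : x m = 0) (hx : ∀ i, m < i → x i = v i) :
    ∑ i, c i * x i = ∑ j ∈ SigGt v m, c j + ∑ i ∈ univ.filter (· < m), c i * x i := by
  classical
  rw [SigGt, Sig, filter_filter, sum_filter, sum_filter, ← sum_add_distrib]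
  refine sum_congr rfl fun i _ => ?_
  rcases lt_trichotomy i m with h | rfl | h
  · simp [h, h.not_gt]
  · simp [hxm]
  · rcases hv i with hvi | hvi <;> simp [h, h.not_gt, hx i h, hvi]

theorem exists_mem_sig_sum_mul_le_rlexBound (hv : v ∈ ZeroOne d) (c : Fin d → ℝ)
    {x : Fin d → ℝ} (hx : x ∈ Xset v) :
    ∃ m ∈ Sig v, ∑ i, c i * x i ≤ rlexBound v c m := by
  obtain ⟨hx01, m, hlt, hagree⟩ := hx
  have hm : x m = 0 ∧ v m = 1 := by
    rcases hx01 m with h | h <;> rcases hv m with h' | h' <;> rw [h, h'] at hlt <;> norm_num at hlt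
    exact ⟨h, h'⟩
  refine ⟨m, by simp [Sig, hm.2], ?_⟩
  rw [sum_mul_eq_of_eqOn_Ioi hv c x hm.1 hagree, rlexBound]
  gcongr with i
  rcases hx01 i with h | h <;> simp [h]

theorem exists_mem_xset_sum_mul_eq_rlexBound (hv : v ∈ ZeroOne d) (c : Fin d → ℝ)
    {m : Fin d} (hm : m ∈ Sig v) :
    ∃ y ∈ Xset v, ∑ i, c i * y i = rlexBound v c m := by
  classical
  let y : Fin d → ℝ := fun i =>
    if i < m then (if 0 < c i then 1 else 0) else if i = m then 0 else v i
  have hym : y m = 0 := by simp [y]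
  have hy : ∀ i, m < i → y i = v i := fun i hi => by simp [y, hi.not_gt, hi.ne']
  have hvm : v m = 1 := by simpa [Sig] using hm
  refine ⟨y, ⟨fun i => ?_, m, by simp [hym, hvm], hy⟩, ?_⟩
  · unfold y
    split_ifs <;> simp [hv i]
  · rw [sum_mul_eq_of_eqOn_Ioi hv c y hym hy, rlexBound]
    congr 1
    refine sum_congr rfl fun i hi => ?_
    have hi : i < m := (mem_filter.mp hi).2
    by_cases hc : 0 < c i
    · simp [y, hi, hc, hc.le]
    · simp [y, hi, hc, not_lt.mp hc]

theorem isGreatest_sum_mul_pset (hv : v ∈ ZeroOne d) (c : Fin d → ℝ) (hne : (Sig v).Nonempty) :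
    IsGreatest {t : ℝ | ∃ x ∈ Pset v, t = ∑ i, c i * x i} ((Sig v).sup' hne (rlexBound v c)) := by
  constructor
  · obtain ⟨m, hm, hmax⟩ := exists_mem_eq_sup' hne (rlexBound v c)
    obtain ⟨y, hy, hyc⟩ := exists_mem_xset_sum_mul_eq_rlexBound hv c hm
    exact ⟨y, subset_convexHull ℝ _ hy, by rw [hmax, hyc]⟩
  · rintro t ⟨x, hx, rfl⟩
    refine convexHull_min (fun z hz => ?_)
      (convex_halfSpace_le (dotProductBilin ℝ ℝ c).isLinear _) hx
    obtain ⟨m, hm, hle⟩ := exists_mem_sig_sum_mul_le_rlexBound hv c hz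
    exact hle.trans (le_sup' _ hm)

end RevlexPolytope

section StrictAntiEnumeration

variable {α : Type*} [LinearOrder α] {s : Finset α} {w q : ℕ} {sig : ℕ → α}

theorem image_Icc_eq_filter_of_strictAntiOn (hanti : StrictAntiOn sig (Set.Icc 1 w))
    (himg : ∀ j, j ∈ s ↔ ∃ q, 1 ≤ q ∧ q ≤ w ∧ sig q = j) (hq : q ∈ Set.Icc 1 w) :
    (Icc 1 (q - 1)).image sig = s.filter (sig q < ·) := by
  have hqw : q ≤ w := hq.2
  ext j
  simp only [mem_image, mem_filter, mem_Icc, himg]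
  constructor
  · rintro ⟨p, ⟨hp1, hpq⟩, rfl⟩
    have hp : p ∈ Set.Icc 1 w := ⟨hp1, by omega⟩
    exact ⟨⟨p, hp.1, hp.2, rfl⟩, (hanti.lt_iff_gt hq hp).2 (by omega)⟩
  · rintro ⟨⟨p, hp1, hpw, rfl⟩, hlt⟩
    have hpq := (hanti.lt_iff_gt hq ⟨hp1, hpw⟩).1 hlt
    exact ⟨p, ⟨hp1, by omega⟩, rfl⟩

theorem sum_Icc_comp_eq_sum_filter_of_strictAntiOn {β : Type*} [AddCommMonoid β] (f : α → β)
    (hanti : StrictAntiOn sig (Set.Icc 1 w))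
    (himg : ∀ j, j ∈ s ↔ ∃ q, 1 ≤ q ∧ q ≤ w ∧ sig q = j) (hq : q ∈ Set.Icc 1 w) :
    ∑ p ∈ Icc 1 (q - 1), f (sig p) = ∑ j ∈ s.filter (sig q < ·), f j := by
  have hqw : q ≤ w := hq.2
  rw [← image_Icc_eq_filter_of_strictAntiOn hanti himg hq, sum_image]
  refine hanti.injOn.mono ?_
  rw [coe_Icc]
  exact Set.Icc_subset_Icc_right (by omega)

end StrictAntiEnumeration

theorem stmt0_general (d : ℕ) (v : Fin d → ℝ) (hv : v ∈ ZeroOne d) (hv0 : v ≠ 0)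
    (c : Fin d → ℝ)
    (w : ℕ)
    (sig : ℕ → Fin d)
    (hanti : StrictAntiOn sig (Set.Icc 1 w))
    (himg : ∀ j : Fin d, j ∈ Sig v ↔ ∃ q, 1 ≤ q ∧ q ≤ w ∧ sig q = j) :
    IsGreatest {t : ℝ | ∃ x ∈ Pset v, t = ∑ i, c i * x i}
      (sSup {t : ℝ | ∃ q, 1 ≤ q ∧ q ≤ w ∧
        t = (∑ p ∈ Finset.Icc 1 (q - 1), c (sig p)) +
            ∑ i ∈ Finset.univ.filter (fun j : Fin d => (j : ℕ) < (sig q : ℕ)), max (c i) 0}) := by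
  classical
  have hvalue : ∀ q ∈ Set.Icc 1 w, (∑ p ∈ Icc 1 (q - 1), c (sig p)) +
      ∑ i ∈ univ.filter (fun j : Fin d => (j : ℕ) < (sig q : ℕ)), max (c i) 0 =
      rlexBound v c (sig q) := fun q hq => by
    rw [rlexBound, SigGt, sum_Icc_comp_eq_sum_filter_of_strictAntiOn c hanti himg hq]
    rfl
  have hset : {t : ℝ | ∃ q, 1 ≤ q ∧ q ≤ w ∧ t = (∑ p ∈ Icc 1 (q - 1), c (sig p)) +
      ∑ i ∈ univ.filter (fun j : Fin d => (j : ℕ) < (sig q : ℕ)), max (c i) 0} =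
      rlexBound v c '' Sig v := by
    ext t
    simp only [Set.mem_ofPred_eq, Set.mem_image, mem_coe, himg]
    constructor
    · rintro ⟨q, hq1, hqw, rfl⟩
      exact ⟨sig q, ⟨q, hq1, hqw, rfl⟩, (hvalue q ⟨hq1, hqw⟩).symm⟩
    · rintro ⟨_, ⟨q, hq1, hqw, rfl⟩, rfl⟩
      exact ⟨q, hq1, hqw, (hvalue q ⟨hq1, hqw⟩).symm⟩
  have hne := sig_nonempty_of_ne_zero hv hv0
  rw [hset, ← sup'_eq_csSup_image _ hne]
  exact isGreatest_sum_mul_pset hv c hne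

/-- the maximum of `x ↦ c·x` over `P(v)` equals the maximum over
`q ∈ {1,…,s(v)}` of `Σ_{p=1}^{q−1} c_{sig_p(v)} + Σ_{i<sig_q(v)} max(c_i,0)`,
where `sig` is the decreasing enumeration of `Sig(v)`. -/
theorem stmt0 (d : ℕ) (hd : 0 < d) (v : Fin d → ℝ) (hv : v ∈ ZeroOne d) (hv0 : v ≠ 0)
    (c : Fin d → ℝ)
    (w : ℕ) (hw : w = (Sig v).card)
    (sig : ℕ → Fin d)
    (hanti : StrictAntiOn sig (Set.Icc 1 w))
    (himg : ∀ j : Fin d, j ∈ Sig v ↔ ∃ q, 1 ≤ q ∧ q ≤ w ∧ sig q = j) :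
    IsGreatest {t : ℝ | ∃ x ∈ Pset v, t = ∑ i, c i * x i}
      (sSup {t : ℝ | ∃ q, 1 ≤ q ∧ q ≤ w ∧
        t = (∑ p ∈ Finset.Icc 1 (q - 1), c (sig p)) +
            ∑ i ∈ Finset.univ.filter (fun j : Fin d => (j : ℕ) < (sig q : ℕ)), max (c i) 0}) :=
  stmt0_general d v hv hv0 c w sig hanti himg
end

section
/- For every positive integer d and every v ∈ {0,1}^d with v ≠ 0, the revlex-initial 0/1-polytope P(v) equals the set of all x ∈ ℝ^d satisfying: 0 ≤ x_i ≤ 1 for all i ∈ {0,…,d−1}; x_i + Σ_{j ∈ Sig_{>i}(v)} x_j ≤ |Sig_{>i}(v)| for all i ∈ coSig(v); and Σ_{j ∈ Sig(v)} x_j ≤ s(v) − 1. -/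
/-!
Write `Q(v)` (`Qset v`) for the solution set of the inequalities. Points of `X(v)` satisfy them
and `Q(v)` is convex, so `P(v) ⊆ Q(v)`.
For the converse induct on `|Sig v|`; if `Sig v = ∅` then `Q(v) = ∅`, because `0 ≤ 0 - 1` fails.
Otherwise let `m = min Sig v` and `v'` be `v` with `v_m` set to `0`, so `X(v') ⊆ X(v)` and
`Sig v' = Sig v \ {m}`. The point `c` that agrees with `x` below `m` and with `v'` from `m` on
lies in the box spanned by the 0/1-points agreeing with `v'` from `m` on, all of which lie in
`X(v)`. With `t = min 1 (∑_{j ∈ Sig v'} (1 - x_j))` the point `z = t⁻¹ (x - (1 - t) c)`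
satisfies `Q(v')`, and `x = (1 - t) c + t z`.
-/

open Finset

section RevlexPolytope

variable {d : ℕ}

def Qset (v : Fin d → ℝ) : Set (Fin d → ℝ) :=
  {x : Fin d → ℝ |
      (∀ i, 0 ≤ x i ∧ x i ≤ 1) ∧
      (∀ i : Fin d, i ∉ Sig v → x i + ∑ j ∈ SigGt v i, x j ≤ ((SigGt v i).card : ℝ)) ∧
      (∑ j ∈ Sig v, x j ≤ ((Sig v).card : ℝ) - 1)}

lemma mem_Sig {v : Fin d → ℝ} {i : Fin d} : i ∈ Sig v ↔ v i = 1 := by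
  simp [Sig]

lemma mem_SigGt {v : Fin d → ℝ} {i j : Fin d} : j ∈ SigGt v i ↔ v j = 1 ∧ i < j := by
  simp [SigGt, mem_Sig]

lemma ZeroOne.bounds {x : Fin d → ℝ} (hx : x ∈ ZeroOne d) (i : Fin d) : 0 ≤ x i ∧ x i ≤ 1 := by
  rcases hx i with h | h <;> simp [h]

lemma ZeroOne.eq_zero_of_notMem_Sig {v : Fin d → ℝ} (hv : v ∈ ZeroOne d) {i : Fin d}
    (hi : i ∉ Sig v) : v i = 0 :=
  (hv i).resolve_right (mt mem_Sig.2 hi)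

lemma sum_one_sub {ι : Type*} (s : Finset ι) (x : ι → ℝ) :
    ∑ j ∈ s, (1 - x j) = s.card - ∑ j ∈ s, x j := by
  simp [sum_sub_distrib]

lemma sum_one_sub_nonneg {ι : Type*} {s : Finset ι} {x : ι → ℝ} (hx : ∀ j ∈ s, x j ≤ 1) :
    0 ≤ ∑ j ∈ s, (1 - x j) :=
  sum_nonneg fun j hj => sub_nonneg.2 (hx j hj)

lemma convex_Qset (v : Fin d → ℝ) : Convex ℝ (Qset v) := by
  have hQ : Qset v = (⋂ i, {x | 0 ≤ x i} ∩ {x | x i ≤ 1}) ∩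
      (⋂ i, ⋂ (_ : i ∉ Sig v), {x | x i + ∑ j ∈ SigGt v i, x j ≤ ((SigGt v i).card : ℝ)}) ∩
      {x | ∑ j ∈ Sig v, x j ≤ ((Sig v).card : ℝ) - 1} := by
    ext x
    simp [Qset, forall_and, and_assoc]
  rw [hQ]
  refine ((convex_iInter fun i => (convex_halfSpace_ge ?_ _).inter (convex_halfSpace_le ?_ _)).inter
    (convex_iInter fun i => convex_iInter fun _ => convex_halfSpace_le ?_ _)).inter
    (convex_halfSpace_le ?_ _)
  all_goals exact ⟨fun x y => by simp [sum_add_distrib, add_add_add_comm],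
    fun c x => by simp [mul_sum, mul_add]⟩

lemma Xset_subset_Qset {v : Fin d → ℝ} (hv : v ∈ ZeroOne d) : Xset v ⊆ Qset v := by
  rintro x ⟨hx, m, hxm, habove⟩
  have hbox := ZeroOne.bounds hx
  have hm : x m = 0 ∧ v m = 1 := by
    rcases hx m with h | h <;> rcases hv m with h' | h' <;> rw [h, h'] at hxm <;> norm_num at hxm
    exact ⟨h, h'⟩
  have hslack : ∀ s, m ∈ s → 1 ≤ ∑ j ∈ s, (1 - x j) := fun s hs =>
    calc (1 : ℝ) = 1 - x m := by rw [hm.1, sub_zero]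
      _ ≤ _ := single_le_sum (fun j _ => sub_nonneg.2 (hbox j).2) hs
  refine ⟨hbox, fun i hi => ?_, ?_⟩
  · rcases lt_or_gt_of_ne (show i ≠ m by rintro rfl; exact hi (mem_Sig.2 hm.2)) with h | h
    · have := hslack _ (mem_SigGt.2 ⟨hm.2, h⟩)
      linarith [sum_one_sub (SigGt v i) x, (hbox i).2]
    · have := sum_one_sub_nonneg (s := SigGt v i) fun j _ => (hbox j).2
      linarith [sum_one_sub (SigGt v i) x, habove i h, ZeroOne.eq_zero_of_notMem_Sig hv hi]
  · linarith [hslack _ (mem_Sig.2 hm.2), sum_one_sub (Sig v) x]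

lemma inv_smul_mem_Qset {u w : Fin d → ℝ} {t : ℝ} (ht : 0 < t) (hbox : ∀ i, 0 ≤ w i ∧ w i ≤ t)
    (hco : ∀ i ∉ Sig u, w i + ∑ j ∈ SigGt u i, w j ≤ t * (SigGt u i).card)
    (hsig : ∑ j ∈ Sig u, w j ≤ t * ((Sig u).card - 1)) : t⁻¹ • w ∈ Qset u := by
  simp only [Qset, Set.mem_ofPred_eq, Pi.smul_apply, smul_eq_mul, ← mul_sum, ← mul_add,
    inv_mul_le_iff₀ ht]
  refine ⟨fun i => ⟨by positivity [(hbox i).1], by linarith [(hbox i).2]⟩, hco, hsig⟩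

lemma Sig_update_zero (v : Fin d → ℝ) (m : Fin d) :
    Sig (Function.update v m 0) = (Sig v).erase m := by
  ext j
  rcases eq_or_ne j m with rfl | h <;> simp [mem_Sig, Function.update_of_ne, *]

lemma SigGt_update_zero_eq_self {v : Fin d → ℝ} {m i : Fin d} (hi : m ≤ i) :
    SigGt (Function.update v m 0) i = SigGt v i := by
  ext j
  simp only [SigGt, Sig_update_zero, mem_filter, mem_erase]
  exact ⟨fun h => ⟨h.1.2, h.2⟩, fun h => ⟨⟨(hi.trans_lt h.2).ne', h.1⟩, h.2⟩⟩

lemma SigGt_subset_erase {v : Fin d → ℝ} {m i : Fin d} (hi : m ≤ i) :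
    SigGt v i ⊆ (Sig v).erase m := by
  rw [← SigGt_update_zero_eq_self hi, ← Sig_update_zero]
  exact filter_subset _ _

lemma SigGt_update_zero_eq_erase {v : Fin d → ℝ} {m i : Fin d} (hlow : ∀ j < m, v j = 0)
    (hi : i ≤ m) : SigGt (Function.update v m 0) i = (Sig v).erase m := by
  rw [SigGt, Sig_update_zero]
  refine filter_true_of_mem fun j hj => ?_
  rw [mem_erase, mem_Sig] at hj
  exact hi.trans_lt ((not_lt.1 fun h => by simp [hlow j h] at hj).lt_of_ne' hj.1)

lemma Xset_update_zero_subset {v : Fin d → ℝ} {m : Fin d} (hlow : ∀ j < m, v j = 0) :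
    Xset (Function.update v m 0) ⊆ Xset v := by
  rintro x ⟨hx, m', hlt, habove⟩
  have hm' : m < m' := by
    have := (ZeroOne.bounds hx m').1
    rcases lt_trichotomy m' m with h | rfl | h
    · rw [Function.update_of_ne h.ne, hlow _ h] at hlt; linarith
    · rw [Function.update_self] at hlt; linarith
    · exact h
  refine ⟨hx, m', ?_, fun i hi => ?_⟩
  · rwa [Function.update_of_ne hm'.ne'] at hlt
  · rw [habove i hi, Function.update_of_ne (hm'.trans hi).ne']

lemma mem_Pset_of_eq_update_zero {v y : Fin d → ℝ} {m : Fin d} (hv : v ∈ ZeroOne d) (hm : v m = 1)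
    (hlt : ∀ i < m, 0 ≤ y i ∧ y i ≤ 1) (hge : ∀ i, m ≤ i → y i = Function.update v m 0 i) :
    y ∈ Pset v := by
  classical
  let T : Fin d → Set ℝ := fun i => if i < m then {0, 1} else {Function.update v m 0 i}
  have hT : Set.univ.pi T ⊆ Xset v := by
    intro z hz
    simp only [Set.mem_univ_pi, T] at hz
    refine ⟨fun i => ?_, m, ?_, fun i hi => ?_⟩
    · by_cases h : i < m
      · simpa [h] using hz i
      · rcases eq_or_ne i m with rfl | h'
        · exact Or.inl (by simpa using hz i)
        · rw [show z i = v i by simpa [h, h'] using hz i]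
          exact hv i
    · rw [show z m = 0 by simpa using hz m, hm]
      exact one_pos
    · simpa [lt_asymm hi, hi.ne'] using hz i
  refine convexHull_mono hT (mem_convexHull_pi fun i _ => ?_)
  by_cases hi : i < m
  · simpa [T, hi, convexHull_pair, segment_eq_Icc] using hlt i hi
  · simp [T, hi, hge i (not_lt.1 hi)]

def splice (m : Fin d) (x y : Fin d → ℝ) : Fin d → ℝ := fun i => if i < m then x i else y i

section Step

variable {v x : Fin d → ℝ} {m : Fin d}

lemma le_sum_SigGt_one_sub (hm : v m = 1) (hlow : ∀ j < m, v j = 0) (hx : x ∈ Qset v) {i : Fin d}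
    (hi : m ≤ i) (hi' : i ∉ (Sig v).erase m) : x i ≤ ∑ j ∈ SigGt v i, (1 - x j) := by
  rw [sum_one_sub]
  rcases hi.eq_or_lt with rfl | hi
  · have hsig := hx.2.2
    rw [← add_sum_erase _ _ (mem_Sig.2 hm)] at hsig
    rw [← SigGt_update_zero_eq_self le_rfl, SigGt_update_zero_eq_erase hlow le_rfl,
      card_erase_of_mem (mem_Sig.2 hm), Nat.cast_sub (card_pos.2 ⟨m, mem_Sig.2 hm⟩), Nat.cast_one]
    linarith
  · linarith [hx.2.1 i fun h => hi' (mem_erase.2 ⟨hi.ne', h⟩)]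

lemma le_sum_erase_one_sub (hm : v m = 1) (hlow : ∀ j < m, v j = 0) (hx : x ∈ Qset v) {i : Fin d}
    (hi : m ≤ i) (hi' : i ∉ (Sig v).erase m) : x i ≤ ∑ j ∈ (Sig v).erase m, (1 - x j) :=
  (le_sum_SigGt_one_sub hm hlow hx hi hi').trans <| sum_le_sum_of_subset_of_nonneg
    (SigGt_subset_erase hi) fun j _ _ => sub_nonneg.2 (hx.1 j).2

lemma update_zero_eq_ite (hv : v ∈ ZeroOne d) (i : Fin d) :
    Function.update v m 0 i = if i ∈ (Sig v).erase m then 1 else 0 := by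
  rcases eq_or_ne i m with rfl | h
  · simp
  · rw [Function.update_of_ne h]
    by_cases hi : v i = 1 <;> simp [mem_Sig, h, hi, (hv i).resolve_right]

lemma sub_smul_splice_bounds (hv : v ∈ ZeroOne d) (hm : v m = 1) (hlow : ∀ j < m, v j = 0)
    (hx : x ∈ Qset v) {t : ℝ} (ht : t = min 1 (∑ j ∈ (Sig v).erase m, (1 - x j))) (i : Fin d) :
    0 ≤ (x - (1 - t) • splice m x (Function.update v m 0)) i ∧
      (x - (1 - t) • splice m x (Function.update v m 0)) i ≤ t := by
  have ht0 : 0 ≤ t := ht ▸ le_min zero_le_one (sum_one_sub_nonneg fun j _ => (hx.1 j).2)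
  have ht1 : t ≤ 1 := ht ▸ min_le_left _ _
  obtain ⟨hx0, hx1⟩ := hx.1 i
  simp only [Pi.sub_apply, Pi.smul_apply, smul_eq_mul, splice, update_zero_eq_ite hv]
  by_cases hi : i < m
  · rw [if_pos hi]
    constructor <;> nlinarith
  rw [if_neg hi]
  by_cases hi' : i ∈ (Sig v).erase m
  · have : 1 - x i ≤ t :=
      ht ▸ le_min (by linarith) (single_le_sum (fun j _ => sub_nonneg.2 (hx.1 j).2) hi')
    rw [if_pos hi']
    constructor <;> linarith
  · have : x i ≤ t := ht ▸ le_min hx1 (le_sum_erase_one_sub hm hlow hx (not_lt.1 hi) hi')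
    rw [if_neg hi']
    constructor <;> linarith

lemma inv_smul_sub_smul_splice_mem_Qset (hv : v ∈ ZeroOne d) (hm : v m = 1)
    (hlow : ∀ j < m, v j = 0) (hx : x ∈ Qset v) {t : ℝ}
    (ht : t = min 1 (∑ j ∈ (Sig v).erase m, (1 - x j))) (ht0 : 0 < t) :
    t⁻¹ • (x - (1 - t) • splice m x (Function.update v m 0)) ∈ Qset (Function.update v m 0) := by
  set w := x - (1 - t) • splice m x (Function.update v m 0) with hw
  have hts : t ≤ ∑ j ∈ (Sig v).erase m, (1 - x j) := ht ▸ min_le_right _ _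
  have hsum : ∀ G ⊆ (Sig v).erase m, ∑ j ∈ G, w j = ∑ j ∈ G, x j - (1 - t) * G.card := by
    intro G hG
    have hwj : ∀ j ∈ G, w j = x j - (1 - t) := fun j hj => by
      have := mem_SigGt.1 ((SigGt_update_zero_eq_erase hlow le_rfl).symm ▸ hG hj)
      simp [hw, splice, not_lt.2 this.2.le, this.1]
    rw [sum_congr rfl hwj, sum_sub_distrib, sum_const, nsmul_eq_mul, mul_comm]
  refine inv_smul_mem_Qset ht0 (sub_smul_splice_bounds hv hm hlow hx ht) (fun i hi => ?_) ?_
  · rw [Sig_update_zero] at hi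
    rcases lt_or_ge i m with him | him
    · have hwi : w i = t * x i := by simp [hw, splice, him]; ring
      rw [SigGt_update_zero_eq_erase hlow him.le, hsum _ subset_rfl, hwi]
      linarith [mul_le_of_le_one_right ht0.le (hx.1 i).2, sum_one_sub ((Sig v).erase m) x]
    · have hwi : w i = x i := by simp [hw, splice, not_lt.2 him, update_zero_eq_ite hv, hi]
      rw [SigGt_update_zero_eq_self him, hsum _ (SigGt_subset_erase him), hwi]
      linarith [le_sum_SigGt_one_sub hm hlow hx him hi, sum_one_sub (SigGt v i) x]
  · rw [Sig_update_zero, hsum _ subset_rfl]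
    linarith [sum_one_sub ((Sig v).erase m) x]

lemma mem_Pset_of_mem_Qset (hv : v ∈ ZeroOne d) (hm : v m = 1) (hlow : ∀ j < m, v j = 0)
    (hsub : Qset (Function.update v m 0) ⊆ Pset v) (hx : x ∈ Qset v) : x ∈ Pset v := by
  have hc : splice m x (Function.update v m 0) ∈ Pset v :=
    mem_Pset_of_eq_update_zero hv hm (fun i hi => by simpa [splice, hi] using hx.1 i)
      fun i hi => by simp [splice, not_lt.2 hi]
  set t := min 1 (∑ j ∈ (Sig v).erase m, (1 - x j)) with ht
  have hbounds := sub_smul_splice_bounds hv hm hlow hx ht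
  have ht0 : 0 ≤ t := le_min zero_le_one (sum_one_sub_nonneg fun j _ => (hx.1 j).2)
  rcases ht0.eq_or_lt with ht0 | ht0
  · convert hc using 1
    funext i
    have := hbounds i
    rw [← ht0] at this
    simp only [Pi.sub_apply, Pi.smul_apply, smul_eq_mul, sub_zero, one_mul] at this
    linarith [this.1, this.2]
  · have hz := hsub (inv_smul_sub_smul_splice_mem_Qset hv hm hlow hx ht ht0)
    have hP : Convex ℝ (Pset v) := convex_convexHull ℝ _
    convert hP hc hz (sub_nonneg.2 (min_le_left _ _ : t ≤ 1)) ht0.le (sub_add_cancel 1 t) using 1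
    rw [smul_smul, mul_inv_cancel₀ ht0.ne', one_smul, add_sub_cancel]

end Step

theorem Qset_subset_Pset {v : Fin d → ℝ} (hv : v ∈ ZeroOne d) : Qset v ⊆ Pset v := by
  induction hk : (Sig v).card generalizing v with
  | zero =>
    rintro x ⟨-, -, hsig⟩
    rw [hk, card_eq_zero.1 hk, sum_empty] at hsig
    norm_num at hsig
  | succ n ih =>
    have hne : (Sig v).Nonempty := card_pos.1 (hk ▸ n.succ_pos)
    set m := (Sig v).min' hne
    have hm : v m = 1 := mem_Sig.1 (min'_mem _ _)
    have hlow : ∀ j < m, v j = 0 := fun j hj =>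
      ZeroOne.eq_zero_of_notMem_Sig hv fun h => (min'_le _ _ h).not_gt hj
    have hv' : Function.update v m 0 ∈ ZeroOne d := fun i => by
      rcases eq_or_ne i m with rfl | h
      · simp
      · rw [Function.update_of_ne h]; exact hv i
    have hk' : (Sig (Function.update v m 0)).card = n := by
      rw [Sig_update_zero, card_erase_of_mem (mem_Sig.2 hm), hk, Nat.add_sub_cancel]
    intro x hx
    exact mem_Pset_of_mem_Qset hv hm hlow
      ((ih hv' hk').trans (convexHull_mono (Xset_update_zero_subset hlow))) hx

end RevlexPolytope

theorem stmt1_general (d : ℕ) (v : Fin d → ℝ) (hv : v ∈ ZeroOne d) :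
    Pset v = {x : Fin d → ℝ |
      (∀ i, 0 ≤ x i ∧ x i ≤ 1) ∧
      (∀ i : Fin d, i ∉ Sig v → x i + ∑ j ∈ SigGt v i, x j ≤ ((SigGt v i).card : ℝ)) ∧
      (∑ j ∈ Sig v, x j ≤ ((Sig v).card : ℝ) - 1)} :=
  (convexHull_min (Xset_subset_Qset hv) (convex_Qset v)).antisymm (Qset_subset_Pset hv)

/-- linear description of the revlex-initial 0/1-polytope `P(v)`. -/
theorem stmt1 (d : ℕ) (hd : 0 < d) (v : Fin d → ℝ) (hv : v ∈ ZeroOne d) (hv0 : v ≠ 0) :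
    Pset v = {x : Fin d → ℝ |
      (∀ i, 0 ≤ x i ∧ x i ≤ 1) ∧
      (∀ i : Fin d, i ∉ Sig v → x i + ∑ j ∈ SigGt v i, x j ≤ ((SigGt v i).card : ℝ)) ∧
      (∑ j ∈ Sig v, x j ≤ ((Sig v).card : ℝ) - 1)} :=
  stmt1_general d v hv
end

section
/- For every positive integer d and every v ∈ {0,1}^d with e_{d−1} ≺_rlex v (so that P(v) is full-dimensional in ℝ^d), and for every i ∈ {0,…,d−1}, the inequality x_i ≥ 0 defines a facet of P(v). -/
open Finset

/-!
From `e_{d-1} ≺ v` the last coordinate of `v` is at least `1`, so `0` and all unit vectors `e_j`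
lie in `X(v)` (for `j < d - 1` they already lose to `v` in the last coordinate). Hence `P(v)` is
full-dimensional, and its part on `x_i = 0` contains `0` and the `e_j` with `j ≠ i`, which span
that hyperplane. Nonnegativity holds on `X(v)`, hence on its convex hull.
-/

section UnitVectors

variable {ι R : Type*} [Fintype ι] [DecidableEq ι]

lemma Submodule.mem_of_forall_single_mem [Semiring R] {S : Submodule R (ι → R)} {x : ι → R}
    (h : ∀ j, x j ≠ 0 → Pi.single j 1 ∈ S) : x ∈ S := by
  rw [pi_eq_sum_univ' x]
  refine S.sum_mem fun j _ => ?_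
  by_cases hj : x j = 0
  · simp [hj]
  · exact S.smul_mem _ (h j hj)

variable [Ring R] {s : Set (ι → R)}

lemma vectorSpan_eq_top_of_zero_mem_of_single_mem (h0 : 0 ∈ s)
    (hs : ∀ j, Pi.single j 1 ∈ s) : vectorSpan R s = ⊤ :=
  Submodule.eq_top_iff'.2 fun _ => Submodule.mem_of_forall_single_mem fun j _ => by
    simpa using vsub_mem_vectorSpan R (hs j) h0

lemma vectorSpan_eq_ker_proj_of_zero_mem_of_single_mem (i : ι) (hsub : s ⊆ {x | x i = 0})
    (h0 : 0 ∈ s) (hs : ∀ j, j ≠ i → Pi.single j 1 ∈ s) :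
    vectorSpan R s = LinearMap.ker (LinearMap.proj i : (ι → R) →ₗ[R] R) := by
  apply le_antisymm
  · refine Submodule.span_le.2 (Set.vsub_subset_iff.2 fun a ha b hb => ?_)
    have ha' : a i = 0 := hsub ha
    have hb' : b i = 0 := hsub hb
    simp [ha', hb']
  · intro x hx
    refine Submodule.mem_of_forall_single_mem fun j hj => ?_
    have hji : j ≠ i := by
      rintro rfl
      exact hj hx
    simpa using vsub_mem_vectorSpan R (hs j hji) h0

end UnitVectors

lemma finrank_ker_proj {ι K : Type*} [Fintype ι] [DecidableEq ι] [Field K] (i : ι) :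
    Module.finrank K (LinearMap.ker (LinearMap.proj i : (ι → K) →ₗ[K] K)) =
      Fintype.card ι - 1 := by
  have hne : (LinearMap.proj i : (ι → K) →ₗ[K] K) ≠ 0 := fun h => by
    simpa using LinearMap.congr_fun h (Pi.single i 1)
  have := Module.Dual.finrank_ker_add_one_of_ne_zero hne
  rw [Module.finrank_fintype_fun_eq_card] at this
  omega

section Revlex

variable {d : ℕ} {x y v : Fin d → ℝ} {m : Fin d}

lemma rlexLt_of_isTop (hm : IsTop m) (h : x m < y m) : RlexLt x y :=
  ⟨m, h, fun i hi => absurd (hm i) hi.not_ge⟩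

lemma RlexLt.le_of_isTop (h : RlexLt x y) (hm : IsTop m) : x m ≤ y m := by
  obtain ⟨k, hk, heq⟩ := h
  rcases (hm k).lt_or_eq with hlt | rfl
  · exact (heq m hlt).le
  · exact hk.le

lemma nonneg_of_mem_Pset (hx : x ∈ Pset v) (i : Fin d) : 0 ≤ x i := by
  refine convexHull_min (fun y hy => ?_) (convex_halfSpace_ge (LinearMap.proj i).isLinear 0) hx
  rcases hy.1 i with h | h <;> simp [h]

lemma one_le_of_rlexLt_single (hm : IsTop m) (hv : RlexLt (Pi.single m 1) v) : 1 ≤ v m := by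
  simpa using hv.le_of_isTop hm

lemma single_mem_ZeroOne (j : Fin d) : Pi.single j 1 ∈ ZeroOne d := fun k => by
  rcases eq_or_ne k j with rfl | hkj
  · simp
  · simp [hkj]

lemma mem_Xset_of_isTop (hx : x ∈ ZeroOne d) (hm : IsTop m) (hv : RlexLt (Pi.single m 1) v)
    (hxm : x m = 0) : x ∈ Xset v :=
  ⟨hx, rlexLt_of_isTop hm (by linarith [one_le_of_rlexLt_single hm hv])⟩

lemma zero_mem_Xset_of_isTop (hm : IsTop m) (hv : RlexLt (Pi.single m 1) v) : 0 ∈ Xset v :=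
  mem_Xset_of_isTop (fun _ => Or.inl rfl) hm hv rfl

lemma single_mem_Xset_of_isTop (hm : IsTop m) (hv : RlexLt (Pi.single m 1) v) (j : Fin d) :
    Pi.single j 1 ∈ Xset v := by
  rcases eq_or_ne j m with rfl | hjm
  · exact ⟨single_mem_ZeroOne j, hv⟩
  · exact mem_Xset_of_isTop (single_mem_ZeroOne j) hm hv (Pi.single_eq_of_ne hjm.symm 1)

end Revlex

/-- for full-dimensional `P(v)` and every coordinate `i`,
the inequality `x_i ≥ 0` defines a facet of `P(v)`. -/
theorem stmt3 (d : ℕ) (hd : 0 < d) (v : Fin d → ℝ)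
    (hfull : RlexLt (Pi.single (⟨d - 1, by omega⟩ : Fin d) (1 : ℝ)) v)
    (i : Fin d) :
    (∀ x ∈ Pset v, 0 ≤ x i) ∧
    adim {x ∈ Pset v | x i = 0} = adim (Pset v) - 1 := by
  have htop : IsTop (⟨d - 1, by omega⟩ : Fin d) := fun k =>
    Fin.le_def.2 (Nat.le_sub_one_of_lt k.isLt)
  have h0 : (0 : Fin d → ℝ) ∈ Pset v :=
    subset_convexHull ℝ _ (zero_mem_Xset_of_isTop htop hfull)
  have hsingle (j : Fin d) : Pi.single j 1 ∈ Pset v :=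
    subset_convexHull ℝ _ (single_mem_Xset_of_isTop htop hfull j)
  have hface0 : (0 : Fin d → ℝ) ∈ {x ∈ Pset v | x i = 0} := ⟨h0, rfl⟩
  have hface_single (j : Fin d) (hji : j ≠ i) : Pi.single j 1 ∈ {x ∈ Pset v | x i = 0} :=
    ⟨hsingle j, Pi.single_eq_of_ne (Ne.symm hji) 1⟩
  refine ⟨fun x hx => nonneg_of_mem_Pset hx i, ?_⟩
  rw [adim, adim, direction_affineSpan, direction_affineSpan,
    vectorSpan_eq_top_of_zero_mem_of_single_mem h0 hsingle,
    vectorSpan_eq_ker_proj_of_zero_mem_of_single_mem i (fun _ hx => hx.2) hface0 hface_single,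
    finrank_ker_proj, finrank_top, Module.finrank_fin_fun, Fintype.card_fin]
end

section
/- Let d be a positive integer and v ∈ {0,1}^d with v ≠ 0, with weight w = s(v) and signature sig_1(v) > … > sig_w(v). Let 1 ≤ p < q ≤ w, and let x be a vertex of P(v) contained in the block X_q(v). Then for every z ∈ X_p(v) with z_i = x_i for all 0 ≤ i < sig_q(v), z_{sig_q(v)} = 0, and z_{sig_r(v)} = 1 for all r with p < r < q, the closed segment [x,z] is an edge (a 1-dimensional face) of P(v). -/
open Finset

/-- The block `X_q(v)`: 0/1-points with `x_{sig_q(v)} = 0` agreeing with `v`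
above `sig_q(v)`. -/
def Block {d : ℕ} (v : Fin d → ℝ) (sig : ℕ → Fin d) (q : ℕ) : Set (Fin d → ℝ) :=
  {x | x ∈ ZeroOne d ∧ x (sig q) = 0 ∧ ∀ i : Fin d, sig q < i → x i = v i}

/-- `max({i < b : x_i ≠ v_i} ∪ {−1})` as an integer. -/
noncomputable def maxDiff {d : ℕ} (v x : Fin d → ℝ) (b : ℕ) : ℤ :=
  (insert (-1 : ℤ)
    ((@Finset.filter (Fin d) (fun i => (i : ℕ) < b ∧ x i ≠ v i)
        (Classical.decPred _) Finset.univ).image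
      (fun i : Fin d => ((i : ℕ) : ℤ)))).max' (Finset.insert_nonempty _ _)

/-! The segment `[x, z]` is exposed by a linear functional. The vertices `x` and `z` differ in
the coordinate `b = sig_p(v)`, where `x_b = 1` and `z_b = 0`, and in a set `S` of coordinates
above `sig_q(v)` on which `v` vanishes, `x` is `0` and `z` is `1`. The functional rewards
agreement with `x` outside `{b} ∪ S` with weight `|S| + 1` and adds `|S| y_b + ∑_{i ∈ S} y_i`.
Among 0/1-points it is therefore maximal exactly at the points that agree with `x` outside
`{b} ∪ S` and either have `y_b = 0, y_S = 1` (that is `z`) or `y_b = 1`; in `X(v)` the revlex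
condition forces the latter point to be `x`. -/

section ExposedFaces

variable {𝕜 E : Type*} [Field 𝕜] [LinearOrder 𝕜] [IsStrictOrderedRing 𝕜]
  [AddCommGroup E] [Module 𝕜 E]

theorem isExtreme_inter_level {A : Set E} (l : E →ₗ[𝕜] 𝕜) {M : 𝕜} (hle : ∀ y ∈ A, l y ≤ M) :
    IsExtreme 𝕜 A (A ∩ {y | l y = M}) := by
  refine ⟨Set.inter_subset_left, fun x₁ hx₁ x₂ hx₂ y ⟨_, hy⟩ ⟨a, b, ha, hb, hab, hxy⟩ => ?_⟩
  subst hxy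
  simp only [Set.mem_ofPred_eq, map_add, map_smul, smul_eq_mul] at hy
  have h₂ : b * l x₂ ≤ b * M := mul_le_mul_of_nonneg_left (hle x₂ hx₂) hb.le
  have h₁ : a * M ≤ a * l x₁ := by linear_combination h₂ + M * hab - hy
  exact ⟨hx₁, le_antisymm (hle x₁ hx₁) (le_of_mul_le_mul_left h₁ ha)⟩

theorem convexHull_inter_level {s : Set E} (l : E →ₗ[𝕜] 𝕜) {M : 𝕜} (hle : ∀ y ∈ s, l y ≤ M) :
    convexHull 𝕜 s ∩ {y | l y = M} = convexHull 𝕜 (s ∩ {y | l y = M}) := by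
  classical
  refine subset_antisymm ?_ (Set.subset_inter (convexHull_mono Set.inter_subset_left)
    (convexHull_min Set.inter_subset_right (convex_hyperplane l.isLinear M)))
  rintro y ⟨hy, hly⟩
  rw [_root_.convexHull_eq] at hy
  obtain ⟨ι, t, w, p, hw₀, hw₁, hp, rfl⟩ := hy
  have hgap : ∑ i ∈ t, w i * (M - l (p i)) = 0 := by
    rw [Set.mem_ofPred_eq, Finset.centerMass_eq_of_sum_1 _ _ hw₁, map_sum] at hly
    simp only [map_smul, smul_eq_mul] at hly
    simp only [mul_sub, Finset.sum_sub_distrib, ← Finset.sum_mul, hw₁, hly, one_mul, sub_self]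
  have hterm := (Finset.sum_eq_zero_iff_of_nonneg fun i hi =>
    mul_nonneg (hw₀ i hi) (sub_nonneg.2 (hle _ (hp i hi)))).1 hgap
  rw [← Finset.centerMass_filter_ne_zero]
  refine Finset.centerMass_mem_convexHull _ (fun i hi => hw₀ i (Finset.mem_filter.1 hi).1)
    (by rw [Finset.sum_filter_ne_zero, hw₁]; exact one_pos) fun i hi => ?_
  obtain ⟨hit, hwi⟩ := Finset.mem_filter.1 hi
  exact ⟨hp i hit, (sub_eq_zero.1 ((mul_eq_zero.1 (hterm i hit)).resolve_left hwi)).symm⟩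

end ExposedFaces

theorem isFaceOf_segment_of_argmax {d : ℕ} {s : Set (Fin d → ℝ)} (l : (Fin d → ℝ) →ₗ[ℝ] ℝ)
    {M : ℝ} (hle : ∀ y ∈ s, l y ≤ M) {x z : Fin d → ℝ} (hxz : s ∩ {y | l y = M} = {x, z}) :
    IsFaceOf (convexHull ℝ s) (segment ℝ x z) := by
  have hface : convexHull ℝ s ∩ {y | l y = M} = segment ℝ x z := by
    rw [convexHull_inter_level l hle, hxz, convexHull_pair]
  refine ⟨convex_segment x z, hface ▸ isExtreme_inter_level l fun y hy => ?_⟩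
  exact convexHull_min hle (convex_halfSpace_le l.isLinear M) hy

theorem adim_segment {d : ℕ} {x z : Fin d → ℝ} (h : x ≠ z) : adim (segment ℝ x z) = 1 := by
  rw [adim, ← convexHull_pair, affineSpan_convexHull, direction_affineSpan, vectorSpan_pair]
  exact finrank_span_singleton (vsub_ne_zero.2 h)

section ZeroOne

variable {d : ℕ}

theorem two_mul_sub_one_mul_eq_sub_ite {x y : ℝ} (hx : x = 0 ∨ x = 1) (hy : y = 0 ∨ y = 1) :
    (2 * x - 1) * y = x - if y = x then 0 else 1 := by
  rcases hx with rfl | rfl <;> rcases hy with rfl | rfl <;> norm_num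

theorem ZeroOne.sum_le_card {y : Fin d → ℝ} (hy : y ∈ ZeroOne d) (S : Finset (Fin d)) :
    ∑ i ∈ S, y i ≤ #S ∧ (∑ i ∈ S, y i = #S → ∀ i ∈ S, y i = 1) := by
  have hle : ∀ i ∈ S, y i ≤ 1 := fun i _ => by rcases hy i with h | h <;> simp [h]
  have hcard : ∑ _i ∈ S, (1 : ℝ) = #S := by simp
  exact ⟨hcard ▸ Finset.sum_le_sum hle,
    fun h => (Finset.sum_eq_sum_iff_of_le hle).1 (h.trans hcard.symm)⟩

noncomputable def edgeFunctional (x : Fin d → ℝ) (b : Fin d) (S : Finset (Fin d)) :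
    (Fin d → ℝ) →ₗ[ℝ] ℝ :=
  ((#S + 1 : ℝ) • ∑ i ∈ (insert b S)ᶜ, (2 * x i - 1) • LinearMap.proj i) +
    (#S : ℝ) • LinearMap.proj b + ∑ i ∈ S, LinearMap.proj i

theorem edgeFunctional_apply {x y : Fin d → ℝ} (hx : x ∈ ZeroOne d) (hy : y ∈ ZeroOne d)
    (b : Fin d) (S : Finset (Fin d)) :
    edgeFunctional x b S y = (#S + 1) * (∑ i ∈ (insert b S)ᶜ, x i -
      #{i ∈ (insert b S)ᶜ | y i ≠ x i}) + (#S * y b + ∑ i ∈ S, y i) := by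
  simp only [edgeFunctional, compl_insert, LinearMap.add_apply, LinearMap.smul_apply,
    LinearMap.sum_apply, LinearMap.coe_proj, Function.eval, smul_eq_mul,
    two_mul_sub_one_mul_eq_sub_ite (hx _) (hy _), sum_sub_distrib, ne_eq, natCast_card_filter,
    ite_not]
  ring

theorem edgeFunctional_gap {x y : Fin d → ℝ} (hx : x ∈ ZeroOne d) (hy : y ∈ ZeroOne d)
    {b : Fin d} {S : Finset (Fin d)} (hxb : x b = 1) (hxS : ∀ i ∈ S, x i = 0) :
    edgeFunctional x b S x - edgeFunctional x b S y =
      (#S + 1) * #{i ∈ (insert b S)ᶜ | y i ≠ x i} + (#S * (1 - y b) - ∑ i ∈ S, y i) := by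
  have hxx : #{i ∈ (insert b S)ᶜ | x i ≠ x i} = 0 := by simp
  rw [edgeFunctional_apply hx hx, edgeFunctional_apply hx hy, hxb, Finset.sum_eq_zero hxS, hxx]
  push_cast
  ring

theorem edgeFunctional_le_and_eq {s : Set (Fin d → ℝ)} (hs : s ⊆ ZeroOne d) {x z : Fin d → ℝ}
    (hx : x ∈ s) {b : Fin d} {S : Finset (Fin d)}
    (hxb : x b = 1) (hzb : z b = 0) (hxS : ∀ i ∈ S, x i = 0) (hzS : ∀ i ∈ S, z i = 1)
    (hzx : ∀ i ∉ insert b S, z i = x i) (hrigid : ∀ y ∈ s, (∀ i ∉ S, y i = x i) → y = x)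
    {y : Fin d → ℝ} (hy : y ∈ s) :
    edgeFunctional x b S y ≤ edgeFunctional x b S x ∧
      (edgeFunctional x b S y = edgeFunctional x b S x → y = x ∨ y = z) := by
  have hgap := edgeFunctional_gap (hs hx) (hs hy) hxb hxS
  obtain ⟨hSle, hSeq⟩ := ZeroOne.sum_le_card (hs hy) S
  rcases Nat.eq_zero_or_pos #{i ∈ (insert b S)ᶜ | y i ≠ x i} with hR | hR
  · have hyR : ∀ i ∉ insert b S, y i = x i := by simpa using hR
    rcases hs hy b with hyb | hyb
    · rw [hR, hyb, Nat.cast_zero] at hgap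
      refine ⟨by linarith, fun h => Or.inr (funext fun i => ?_)⟩
      have hS1 := hSeq (by linarith)
      by_cases hib : i = b
      · rw [hib, hyb, hzb]
      by_cases hiS : i ∈ S
      · rw [hS1 i hiS, hzS i hiS]
      rw [hyR i (by simp [hib, hiS]), hzx i (by simp [hib, hiS])]
    · obtain rfl : y = x := hrigid y hy fun i hiS => by
        by_cases hib : i = b
        · rw [hib, hyb, hxb]
        · exact hyR i (by simp [hib, hiS])
      simp
  · have hyb : y b ≤ 1 := by rcases hs hy b with h | h <;> simp [h]
    have hR1 : (1 : ℝ) ≤ #{i ∈ (insert b S)ᶜ | y i ≠ x i} := by exact_mod_cast hR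
    have hlt : edgeFunctional x b S y < edgeFunctional x b S x := by nlinarith
    exact ⟨hlt.le, fun h => absurd h hlt.ne⟩

theorem edgeFunctional_argmax {s : Set (Fin d → ℝ)} (hs : s ⊆ ZeroOne d) {x z : Fin d → ℝ}
    (hx : x ∈ s) (hz : z ∈ s) {b : Fin d} {S : Finset (Fin d)}
    (hxb : x b = 1) (hzb : z b = 0) (hxS : ∀ i ∈ S, x i = 0) (hzS : ∀ i ∈ S, z i = 1)
    (hzx : ∀ i ∉ insert b S, z i = x i) (hrigid : ∀ y ∈ s, (∀ i ∉ S, y i = x i) → y = x) :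
    (∀ y ∈ s, edgeFunctional x b S y ≤ edgeFunctional x b S x) ∧
      s ∩ {y | edgeFunctional x b S y = edgeFunctional x b S x} = {x, z} := by
  have hmax := fun y (hy : y ∈ s) => edgeFunctional_le_and_eq hs hx hxb hzb hxS hzS hzx hrigid hy
  have hlz : edgeFunctional x b S z = edgeFunctional x b S x := by
    have hzR : #{i ∈ (insert b S)ᶜ | z i ≠ x i} = 0 := by simpa using hzx
    have := edgeFunctional_gap (hs hx) (hs hz) hxb hxS
    rw [hzR, hzb, Finset.sum_congr rfl hzS] at this
    simp only [CharP.cast_eq_zero, mul_zero, sub_zero, mul_one, sum_const, nsmul_eq_mul, sub_self,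
      add_zero] at this
    linarith
  refine ⟨fun y hy => (hmax y hy).1,
    Set.Subset.antisymm (fun y ⟨hy, hly⟩ => (hmax y hy).2 hly) ?_⟩
  rintro y (rfl | rfl)
  exacts [⟨hx, rfl⟩, ⟨hz, hlz⟩]

end ZeroOne

section Revlex

variable {d : ℕ}

theorem block_subset_xset {v : Fin d → ℝ} {sig : ℕ → Fin d} {q : ℕ} (hv : v (sig q) = 1) :
    Block v sig q ⊆ Xset v := fun _ ⟨h01, hzero, habove⟩ =>
  ⟨h01, sig q, by rw [hzero, hv]; exact one_pos, habove⟩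

theorem eq_of_mem_xset_of_eqOn_compl {v x y : Fin d → ℝ} {a : Fin d} {S : Finset (Fin d)}
    (hy : y ∈ Xset v) (hxv : ∀ i, a < i → x i = v i) (hS : ∀ i ∈ S, a < i ∧ v i = 0)
    (hyx : ∀ i ∉ S, y i = x i) : y = x := by
  obtain ⟨hy01, m, hm, habove⟩ := hy
  have hma : m ≤ a := by
    by_contra! ham
    by_cases hmS : m ∈ S
    · rw [(hS m hmS).2] at hm
      rcases hy01 m with h | h <;> linarith
    · rw [hyx m hmS, hxv m ham] at hm
      exact lt_irrefl _ hm
  funext i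
  by_cases hiS : i ∈ S
  · obtain ⟨hai, hvi⟩ := hS i hiS
    rw [habove i (hma.trans_lt hai), hxv i hai]
  · exact hyx i hiS

theorem lt_and_eq_zero_and_eq_one_of_ne {v x z : Fin d → ℝ} {a b : Fin d} (hv : v ∈ ZeroOne d)
    (hz : z ∈ ZeroOne d) (hxa : x a = 0) (hxv : ∀ i, a < i → x i = v i)
    (hzx : ∀ i, i < a → z i = x i) (hza : z a = 0) (hzv : ∀ i, b < i → z i = v i)
    (hmid : ∀ i, a < i → i < b → v i = 1 → z i = 1) {i : Fin d} (hib : i ≠ b)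
    (hi : z i ≠ x i) : a < i ∧ v i = 0 ∧ x i = 0 ∧ z i = 1 := by
  rcases lt_trichotomy i a with hia | rfl | hai
  · exact absurd (hzx i hia) hi
  · exact absurd (hza.trans hxa.symm) hi
  have hxi := hxv i hai
  rcases hib.lt_or_gt with hib | hbi
  · rcases hv i with hvi | hvi
    · refine ⟨hai, hvi, hxi.trans hvi, (hz i).resolve_left fun hzi => hi ?_⟩
      rw [hzi, hxi, hvi]
    · exact absurd ((hmid i hai hib hvi).trans (hxi.trans hvi).symm) hi
  · exact absurd ((hzv i hbi).trans hxi.symm) hi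

end Revlex

theorem stmt9_general (d : ℕ) (v : Fin d → ℝ) (hv : v ∈ ZeroOne d)
    (w : ℕ)
    (sig : ℕ → Fin d)
    (hanti : StrictAntiOn sig (Set.Icc 1 w))
    (himg : ∀ j : Fin d, j ∈ Sig v ↔ ∃ q, 1 ≤ q ∧ q ≤ w ∧ sig q = j)
    (p q : ℕ) (hp : 1 ≤ p) (hpq : p < q) (hq : q ≤ w)
    (x : Fin d → ℝ) (hx : x ∈ Block v sig q)
    (z : Fin d → ℝ) (hzB : z ∈ Block v sig p)
    (hz1 : ∀ i : Fin d, (i : ℕ) < (sig q : ℕ) → z i = x i)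
    (hz2 : z (sig q) = 0)
    (hz3 : ∀ r : ℕ, p < r → r < q → z (sig r) = 1) :
    IsFaceOf (Pset v) (segment ℝ x z) ∧ adim (segment ℝ x z) = 1 := by
  classical
  have hpI : p ∈ Set.Icc 1 w := ⟨hp, hpq.le.trans hq⟩
  have hqI : q ∈ Set.Icc 1 w := ⟨hp.trans hpq.le, hq⟩
  have hsig_one : ∀ r ∈ Set.Icc 1 w, v (sig r) = 1 := fun r hr => by
    simpa [Sig] using (himg (sig r)).2 ⟨r, hr.1, hr.2, rfl⟩
  have hmid : ∀ i, sig q < i → i < sig p → v i = 1 → z i = 1 := fun i hqi hip hvi => by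
    obtain ⟨r, hr1, hrw, rfl⟩ := (himg i).1 (by simpa [Sig] using hvi)
    exact hz3 r ((hanti.lt_iff_gt ⟨hr1, hrw⟩ hpI).1 hip) ((hanti.lt_iff_gt hqI ⟨hr1, hrw⟩).1 hqi)
  obtain ⟨-, hxa, hxv⟩ := id hx
  obtain ⟨hz01, hzb, hzv⟩ := id hzB
  have hxb : x (sig p) = 1 := (hxv _ (hanti hpI hqI hpq)).trans (hsig_one p hpI)
  set S := ({i | i ≠ sig p ∧ z i ≠ x i} : Finset (Fin d))
  have hS : ∀ i ∈ S, sig q < i ∧ v i = 0 ∧ x i = 0 ∧ z i = 1 := fun i hi => by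
    obtain ⟨hib, hi⟩ := (Finset.mem_filter.1 hi).2
    exact lt_and_eq_zero_and_eq_one_of_ne hv hz01 hxa hxv hz1 hz2 hzv hmid hib hi
  obtain ⟨hle, hargmax⟩ := edgeFunctional_argmax (s := Xset v) (fun _ hy => hy.1)
    (block_subset_xset (hsig_one q hqI) hx) (block_subset_xset (hsig_one p hpI) hzB) hxb hzb
    (fun i hi => (hS i hi).2.2.1) (fun i hi => (hS i hi).2.2.2)
    (fun i hi => by_contra fun h => hi (by simp [S, h, em]))
    (fun y hy => eq_of_mem_xset_of_eqOn_compl hy hxv fun i hi => ⟨(hS i hi).1, (hS i hi).2.1⟩)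
  refine ⟨isFaceOf_segment_of_argmax _ hle hargmax, adim_segment fun h => ?_⟩
  simpa [hxb, hzb] using congrFun h (sig p)

/-- if `x` is a vertex of `P(v)` in block `X_q(v)`, `1 ≤ p < q ≤ s(v)`,
and `z ∈ X_p(v)` agrees with `x` below `sig_q(v)`, has `z_{sig_q(v)} = 0` and
`z_{sig_r(v)} = 1` for `p < r < q`, then `[x,z]` is an edge of `P(v)`. -/
theorem stmt9 (d : ℕ) (hd : 0 < d) (v : Fin d → ℝ) (hv : v ∈ ZeroOne d) (hv0 : v ≠ 0)
    (w : ℕ) (hw : w = (Sig v).card)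
    (sig : ℕ → Fin d)
    (hanti : StrictAntiOn sig (Set.Icc 1 w))
    (himg : ∀ j : Fin d, j ∈ Sig v ↔ ∃ q, 1 ≤ q ∧ q ≤ w ∧ sig q = j)
    (p q : ℕ) (hp : 1 ≤ p) (hpq : p < q) (hq : q ≤ w)
    (x : Fin d → ℝ) (hx : x ∈ Block v sig q)
    (z : Fin d → ℝ) (hzB : z ∈ Block v sig p)
    (hz1 : ∀ i : Fin d, (i : ℕ) < (sig q : ℕ) → z i = x i)
    (hz2 : z (sig q) = 0)
    (hz3 : ∀ r : ℕ, p < r → r < q → z (sig r) = 1) :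
    IsFaceOf (Pset v) (segment ℝ x z) ∧ adim (segment ℝ x z) = 1 :=
  stmt9_general d v hv w sig hanti himg p q hp hpq hq x hx z hzB hz1 hz2 hz3
end

section
/- Let d be a positive integer and v ∈ {0,1}^d with v ≠ 0, with weight w = s(v) and signature sig_1(v) > … > sig_w(v). Let 1 ≤ p < q ≤ w, and let x be a vertex of P(v) contained in the block X_q(v) such that max({i ∈ {0,…,sig_q(v)−1} : x_i ≠ v_i} ∪ {−1}) ∉ Sig(v). Then for every z ∈ X_p(v) with z_i = x_i for all 0 ≤ i < sig_q(v), z_{sig_q(v)} = 1, and z_{sig_r(v)} = 1 for all r with p < r < q, the closed segment [x,z] is an edge (a 1-dimensional face) of P(v). -/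
open Finset

/-!
The segment `[x, z]` is exposed by an explicit linear functional. Every `y ∈ X(v)` has a pivot
`k`: the largest index where `y` and `v` differ, with `y_k = 0 < 1 = v_k`. If `k = sig_q(v)`
(resp. `k = sig_p(v)`), then `y` agrees with `x` (resp. `z`) from `k` on, and below `k` the weights
have the sign pattern of `x` (resp. `z`), so `y` is strictly lighter unless it is `x` (resp. `z`).
At any other pivot above `sig_q(v)` the weight of `k` outweighs all lower ones. At a pivot below
`sig_q(v)`, the hypothesis on `max{i < sig_q(v) : x_i ≠ v_i}` gives an index `i < sig_q(v)` with
`x_i = 1` and `y_i = 0`, whose weight `3` beats the loss of `2` at `sig_q(v)`.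
-/

section Convexity

variable {E : Type*} [AddCommGroup E] [Module ℝ E]

theorem Convex.union_setOf_lt {A : Set E} (hA : Convex ℝ A) {l : E →ₗ[ℝ] ℝ} {m : ℝ}
    (hAl : ∀ u ∈ A, l u ≤ m) : Convex ℝ (A ∪ {u | l u < m}) := by
  have mixed : ∀ u₁ ∈ A, ∀ u₂ ∈ {u | l u < m}, ∀ θ₁ θ₂ : ℝ, 0 ≤ θ₁ → 0 ≤ θ₂ → θ₁ + θ₂ = 1 →
      θ₁ • u₁ + θ₂ • u₂ ∈ A ∪ {u | l u < m} := by
    intro u₁ h₁ u₂ h₂ θ₁ θ₂ hθ₁ hθ₂ hθ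
    rcases hθ₂.eq_or_lt with rfl | hθ₂
    · left
      simpa [show θ₁ = 1 by linarith] using h₁
    · right
      have : θ₁ * l u₁ + θ₂ * l u₂ < m := by
        calc θ₁ * l u₁ + θ₂ * l u₂ < θ₁ * m + θ₂ * m :=
              add_lt_add_of_le_of_lt (mul_le_mul_of_nonneg_left (hAl u₁ h₁) hθ₁)
                (mul_lt_mul_of_pos_left h₂ hθ₂)
          _ = m := by rw [← add_mul, hθ, one_mul]
      simpa using this
  rintro u₁ (h₁ | h₁) u₂ (h₂ | h₂) θ₁ θ₂ hθ₁ hθ₂ hθ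
  · exact Or.inl (hA h₁ h₂ hθ₁ hθ₂ hθ)
  · exact mixed u₁ h₁ u₂ h₂ θ₁ θ₂ hθ₁ hθ₂ hθ
  · rw [add_comm] at hθ ⊢
    exact mixed u₂ h₂ u₁ h₁ θ₂ θ₁ hθ₂ hθ₁ hθ
  · exact Or.inr (convex_halfSpace_lt l.isLinear m h₁ h₂ hθ₁ hθ₂ hθ)

variable [TopologicalSpace E]

theorem isExposed_convexHull_segment {S : Set E} {x z : E} (l : StrongDual ℝ E)
    (hx : x ∈ S) (hz : z ∈ S) (hzx : l z = l x) (hS : ∀ y ∈ S, l y < l x ∨ y = x ∨ y = z) :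
    IsExposed ℝ (convexHull ℝ S) (segment ℝ x z) := by
  have hseg : ∀ u ∈ segment ℝ x z, l u = l x := by
    rintro _ ⟨θ₁, θ₂, -, -, hθ, rfl⟩
    rw [map_add, map_smul, map_smul, hzx, smul_eq_mul, smul_eq_mul, ← add_mul, hθ, one_mul]
  have hhull : convexHull ℝ S ⊆ segment ℝ x z ∪ {u | l u < l x} := by
    refine convexHull_min (fun y hy => ?_)
      ((convex_segment x z).union_setOf_lt (l := l.toLinearMap) fun u hu => (hseg u hu).le)
    rcases hS y hy with hlt | rfl | rfl
    exacts [Or.inr hlt, Or.inl (left_mem_segment ℝ _ _), Or.inl (right_mem_segment ℝ _ _)]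
  have hle : ∀ u ∈ convexHull ℝ S, l u ≤ l x := fun u hu =>
    (hhull hu).elim (fun h => (hseg u h).le) fun h => le_of_lt h
  refine fun _ => ⟨l, Set.Subset.antisymm (fun u hu => ⟨?_, fun y hy => ?_⟩) fun u ⟨hu, hmax⟩ => ?_⟩
  · exact (convex_convexHull ℝ S).segment_subset (subset_convexHull ℝ S hx)
      (subset_convexHull ℝ S hz) hu
  · exact (hseg u hu).symm ▸ hle y hy
  · refine (hhull hu).resolve_right fun hlt => ?_
    exact (hmax x (subset_convexHull ℝ S hx)).not_gt hlt

end Convexity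

theorem sum_Iio_two_pow_le {d : ℕ} (k : Fin d) :
    ∑ i ∈ Iio k, (2 : ℝ) ^ (i : ℕ) ≤ 2 ^ (k : ℕ) - 1 := by
  have hlt : ∑ i ∈ Iio k, 2 ^ (i : ℕ) < 2 ^ (k : ℕ) := by
    have := Nat.geomSum_lt le_rfl (s := Iio (k : ℕ)) (n := k) fun j hj => mem_Iio.mp hj
    rwa [← Fin.map_valEmbedding_Iio, sum_map] at this
  have := (Nat.cast_le (α := ℝ)).2 (Nat.succ_le_of_lt hlt)
  push_cast at this
  linarith

def SignAgree (c u : ℝ) : Prop := (c ≤ -1 ∧ u = 0) ∨ (1 ≤ c ∧ u = 1)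

namespace SignAgree

variable {c u y : ℝ}

theorem mul_sub_nonneg (h : SignAgree c u) (hy : y = 0 ∨ y = 1) : 0 ≤ c * (u - y) := by
  rcases h with ⟨hc, rfl⟩ | ⟨hc, rfl⟩ <;> rcases hy with rfl | rfl <;> norm_num <;> linarith

theorem one_le_mul_sub (h : SignAgree c u) (hy : y = 0 ∨ y = 1) (hyu : y ≠ u) :
    1 ≤ c * (u - y) := by
  rcases h with ⟨hc, rfl⟩ | ⟨hc, rfl⟩ <;> rcases hy with rfl | rfl <;>
    first | exact absurd rfl hyu | linarith

end SignAgree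

section ZeroOne

variable {d : ℕ}

theorem abs_sub_le_one_of_mem_zeroOne {u y : Fin d → ℝ} (hu : u ∈ ZeroOne d)
    (hy : y ∈ ZeroOne d) (i : Fin d) : |u i - y i| ≤ 1 := by
  rcases hu i with h | h <;> rcases hy i with g | g <;> simp [h, g]

theorem pos_sum_mul_sub_or_eq {c u y : Fin d → ℝ} {m : Fin d} (hy : y ∈ ZeroOne d)
    (hc : ∀ i < m, SignAgree (c i) (u i)) (hyu : ∀ i, m ≤ i → y i = u i) :
    0 < ∑ i, c i * (u i - y i) ∨ y = u := by
  by_cases h : y = u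
  · exact Or.inr h
  obtain ⟨j, hj⟩ := Function.ne_iff.mp h
  have hjm : j < m := lt_of_not_ge fun hmj => hj (hyu j hmj)
  have hnonneg : ∀ i ∈ univ, 0 ≤ c i * (u i - y i) := fun i _ => by
    by_cases him : i < m
    · exact (hc i him).mul_sub_nonneg (hy i)
    · rw [hyu i (not_lt.1 him), sub_self, mul_zero]
  refine Or.inl ?_
  calc 0 < 1 := one_pos
    _ ≤ c j * (u j - y j) := (hc j hjm).one_le_mul_sub (hy j) hj
    _ ≤ ∑ i, c i * (u i - y i) := single_le_sum hnonneg (mem_univ j)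

theorem le_sum_mul_sub_of_dominant {c u y : Fin d → ℝ} {B : ℝ} {k : Fin d}
    (hc : ∀ i, |c i| ≤ B * 2 ^ (i : ℕ)) (hu : u ∈ ZeroOne d) (hy : y ∈ ZeroOne d)
    (huk : u k = 1) (hyk : y k = 0) (hck : c k = B * 2 ^ (k : ℕ))
    (hyu : ∀ i, k < i → y i = u i) :
    B ≤ ∑ i, c i * (u i - y i) := by
  have hB : 0 ≤ B := nonneg_of_mul_nonneg_left ((abs_nonneg _).trans (hc k)) (by positivity)
  have hlow : ∀ i ∈ Iio k, -(B * 2 ^ (i : ℕ)) ≤ c i * (u i - y i) := fun i _ =>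
    calc -(B * 2 ^ (i : ℕ)) ≤ -|c i| := neg_le_neg (hc i)
      _ ≤ -|c i * (u i - y i)| := by
        rw [abs_mul]
        exact neg_le_neg (mul_le_of_le_one_right (abs_nonneg _)
          (abs_sub_le_one_of_mem_zeroOne hu hy i))
      _ ≤ c i * (u i - y i) := neg_abs_le _
  have hsum : ∑ i, c i * (u i - y i) = ∑ i ∈ Iic k, c i * (u i - y i) := by
    refine (sum_subset (subset_univ _) fun i _ hi => ?_).symm
    rw [hyu i (not_le.1 (by simpa using hi)), sub_self, mul_zero]
  rw [← Iio_insert, sum_insert notMem_Iio_self] at hsum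
  have hgeom := mul_le_mul_of_nonneg_left (sum_Iio_two_pow_le k) hB
  rw [mul_sum] at hgeom
  rw [hsum, hck, huk, hyk]
  linarith [sum_le_sum hlow, sum_neg_distrib (s := Iio k) (f := fun i => B * 2 ^ (i : ℕ))]

theorem exists_pivot_of_mem_Xset {v y : Fin d → ℝ} (hv : v ∈ ZeroOne d) (hy : y ∈ Xset v) :
    ∃ k, y k = 0 ∧ v k = 1 ∧ ∀ i, k < i → y i = v i := by
  obtain ⟨hy01, k, hlt, habove⟩ := hy
  refine ⟨k, ?_, ?_, habove⟩ <;> rcases hy01 k with h | h <;> rcases hv k with g | g <;>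
    rw [h, g] at hlt <;> norm_num at hlt <;> assumption

end ZeroOne

section MaxDiff

variable {d : ℕ} {v x : Fin d → ℝ} {b : ℕ}

theorem le_maxDiff {i : Fin d} (hib : (i : ℕ) < b) (hxi : x i ≠ v i) :
    ((i : ℕ) : ℤ) ≤ maxDiff v x b := by
  unfold maxDiff
  refine le_max' _ _ ?_
  simp only [mem_insert, mem_image, mem_filter, mem_univ, true_and]
  exact Or.inr ⟨i, ⟨hib, hxi⟩, rfl⟩

theorem maxDiff_eq_neg_one_or :
    maxDiff v x b = -1 ∨ ∃ i : Fin d, (i : ℕ) < b ∧ x i ≠ v i ∧ ((i : ℕ) : ℤ) = maxDiff v x b := by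
  have hmem : maxDiff v x b ∈ insert (-1 : ℤ) _ := max'_mem _ _
  simp only [mem_insert, mem_image, mem_filter, mem_univ, true_and] at hmem
  rcases hmem with h | ⟨i, ⟨hib, hxi⟩, h⟩
  exacts [Or.inl h, Or.inr ⟨i, hib, hxi, h⟩]

theorem exists_one_of_maxDiff_notMem_sig (hv : v ∈ ZeroOne d) (hx : x ∈ ZeroOne d)
    (hmax : ¬ ∃ i ∈ Sig v, ((i : ℕ) : ℤ) = maxDiff v x b) {k : Fin d} (hkb : (k : ℕ) < b)
    (hvk : v k = 1) : ∃ i, k ≤ i ∧ (i : ℕ) < b ∧ x i = 1 ∧ (k < i → v i = 0) := by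
  have mem_sig : ∀ {i}, v i = 1 → i ∈ Sig v := fun hvi => by simp [Sig, hvi]
  rcases hx k with hxk | hxk
  swap
  · exact ⟨k, le_rfl, hkb, hxk, fun h => absurd h (lt_irrefl k)⟩
  have hk_le := le_maxDiff hkb (by rw [hxk, hvk]; norm_num : x k ≠ v k)
  have hk_ne : ((k : ℕ) : ℤ) ≠ maxDiff v x b := fun h => hmax ⟨k, mem_sig hvk, h⟩
  rcases maxDiff_eq_neg_one_or (v := v) (x := x) (b := b) with hneg | ⟨i, hib, hxi, hi_eq⟩
  · omega
  have hvi : v i = 0 := (hv i).resolve_right fun hvi => hmax ⟨i, mem_sig hvi, hi_eq⟩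
  refine ⟨i, Fin.le_def.2 (by omega), hib, (hx i).resolve_left (hvi ▸ hxi), fun _ => hvi⟩

end MaxDiff

/-- The configuration of the theorem with `a = sig_p(v)` and `b = sig_q(v)`; the last field is how
the hypothesis `max({i < b : x_i ≠ v_i} ∪ {-1}) ∉ Sig(v)` enters the proof. -/
structure IsEdgePair {d : ℕ} (v x z : Fin d → ℝ) (a b : Fin d) : Prop where
  zeroOne_v : v ∈ ZeroOne d
  zeroOne_x : x ∈ ZeroOne d
  zeroOne_z : z ∈ ZeroOne d
  lt : b < a
  v_a : v a = 1
  v_b : v b = 1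
  x_b : x b = 0
  x_of_gt : ∀ i, b < i → x i = v i
  z_a : z a = 0
  z_of_gt : ∀ i, a < i → z i = v i
  z_of_lt : ∀ i, i < b → z i = x i
  z_b : z b = 1
  z_of_sig : ∀ i, b < i → i < a → v i = 1 → z i = 1
  exists_one : ∀ k, k < b → v k = 1 → ∃ i, k ≤ i ∧ i < b ∧ x i = 1 ∧ (k < i → v i = 0)

/-- The weights of a linear functional exposing `[x, z]`: below `a` they have the sign pattern of
`z` (hence of `x` below `b`), the weight at `a` makes `x` and `z` equally heavy, and the weights
`(d + 2) 2^i` at the other ones of `v` above `b` dominate all lower weights. -/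
noncomputable def edgeWeight {d : ℕ} (v x z : Fin d → ℝ) (a b i : Fin d) : ℝ :=
  if i < b then 4 * x i - 1
  else if i = b then 2
  else if i = a then 2 + ∑ j with b < j ∧ v j = 0, z j
  else if v i = 1 then (d + 2) * 2 ^ (i : ℕ)
  else 2 * z i - 1

section EdgeWeight

variable {d : ℕ} {v x z : Fin d → ℝ} {a b : Fin d}

theorem edgeWeight_of_lt {i : Fin d} (hib : i < b) : edgeWeight v x z a b i = 4 * x i - 1 :=
  if_pos hib

theorem edgeWeight_right : edgeWeight v x z a b b = 2 := by
  simp [edgeWeight]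

theorem edgeWeight_left (hba : b < a) :
    edgeWeight v x z a b a = 2 + ∑ j with b < j ∧ v j = 0, z j := by
  simp [edgeWeight, hba.not_gt, hba.ne']

theorem edgeWeight_of_gt {i : Fin d} (hbi : b < i) (hia : i ≠ a) :
    edgeWeight v x z a b i = if v i = 1 then ((d : ℝ) + 2) * 2 ^ (i : ℕ) else 2 * z i - 1 := by
  simp [edgeWeight, hbi.not_gt, hbi.ne', hia]

end EdgeWeight

namespace IsEdgePair

variable {d : ℕ} {v x z y : Fin d → ℝ} {a b : Fin d}

theorem signAgree_z (h : IsEdgePair v x z a b) :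
    ∀ i < a, SignAgree (edgeWeight v x z a b i) (z i) := by
  intro i hia
  rcases lt_trichotomy i b with hib | rfl | hbi
  · rw [edgeWeight_of_lt hib, h.z_of_lt i hib]
    rcases h.zeroOne_x i with hx | hx <;> rw [hx] <;> norm_num [SignAgree]
  · rw [edgeWeight_right, h.z_b]
    norm_num [SignAgree]
  · rw [edgeWeight_of_gt hbi hia.ne]
    split_ifs with hvi
    · exact Or.inr ⟨one_le_mul_of_one_le_of_one_le (by linarith [d.cast_nonneg (α := ℝ)])
        (one_le_pow₀ one_le_two), h.z_of_sig i hbi hia hvi⟩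
    · rcases h.zeroOne_z i with hz | hz <;> rw [hz] <;> norm_num [SignAgree]

theorem signAgree_x (h : IsEdgePair v x z a b) :
    ∀ i < b, SignAgree (edgeWeight v x z a b i) (x i) := fun i hib =>
  h.z_of_lt i hib ▸ h.signAgree_z i (hib.trans h.lt)

theorem abs_edgeWeight_le (h : IsEdgePair v x z a b) (i : Fin d) :
    |edgeWeight v x z a b i| ≤ (d + 2) * 2 ^ (i : ℕ) := by
  have hd : (1 : ℝ) ≤ d := by exact_mod_cast i.pos
  have hsmall : ∀ c : ℝ, |c| ≤ d + 2 → |c| ≤ (d + 2) * 2 ^ (i : ℕ) :=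
    fun _ hle => hle.trans (le_mul_of_one_le_right (by linarith) (one_le_pow₀ one_le_two))
  rcases lt_trichotomy i b with hib | rfl | hbi
  · refine hsmall _ ?_
    rw [edgeWeight_of_lt hib]
    rcases h.zeroOne_x i with hx | hx <;> rw [hx, abs_le] <;> constructor <;> linarith
  · refine hsmall _ ?_
    rw [edgeWeight_right, abs_le]
    constructor <;> linarith
  by_cases hia : i = a
  · refine hsmall _ ?_
    subst hia
    have hz : ∀ j ∈ ({j | b < j ∧ v j = 0} : Finset (Fin d)), z j ∈ Set.Icc (0 : ℝ) 1 :=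
      fun j _ => (h.zeroOne_z j).elim (fun e => by simp [e]) fun e => by simp [e]
    have hsum_le : ∑ j with b < j ∧ v j = 0, z j ≤ d := by
      refine (sum_le_card_nsmul _ _ 1 fun j hj => (hz j hj).2).trans ?_
      simpa using card_le_univ (α := Fin d) _
    have hsum_nonneg := sum_nonneg fun j hj => (hz j hj).1
    rw [edgeWeight_left h.lt, abs_le]
    constructor <;> linarith
  · rw [edgeWeight_of_gt hbi hia]
    split_ifs
    · rw [abs_of_nonneg (by positivity)]
    · refine hsmall _ ?_
      rcases h.zeroOne_z i with hz | hz <;> rw [hz, abs_le] <;> constructor <;> linarith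

theorem sum_edgeWeight_mul_sub_eq_zero (h : IsEdgePair v x z a b) :
    ∑ i, edgeWeight v x z a b i * (z i - x i) = 0 := by
  set t := ∑ j with b < j ∧ v j = 0, z j with ht
  have hterm : ∀ i, edgeWeight v x z a b i * (z i - x i) =
      (if i = b then 2 else 0) - (if i = a then 2 + t else 0) +
        (if b < i ∧ v i = 0 then z i else 0) := by
    intro i
    rcases lt_trichotomy i b with hib | rfl | hbi
    · simp [h.z_of_lt i hib, hib.ne, (hib.trans h.lt).ne, hib.not_gt]
    · simp [edgeWeight_right, h.z_b, h.x_b, h.lt.ne]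
    by_cases hia : i = a
    · subst hia
      simp [edgeWeight_left h.lt, h.z_a, h.x_of_gt _ h.lt, h.v_a, h.lt.ne', ht]
    rw [edgeWeight_of_gt hbi hia]
    have hxi := h.x_of_gt i hbi
    rcases h.zeroOne_v i with hvi | hvi
    · rcases h.zeroOne_z i with hz | hz <;> norm_num [hvi, hxi, hz, hbi, hbi.ne', hia]
    · have hzi : z i = x i := by
        rcases lt_or_gt_of_ne hia with hia | hai
        · rw [h.z_of_sig i hbi hia hvi, hxi, hvi]
        · rw [h.z_of_gt i hai, hxi]
      simp [hvi, hzi, hbi.ne', hia]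
  rw [sum_congr rfl fun i _ => hterm i, sum_add_distrib, sum_sub_distrib, sum_ite_eq',
    sum_ite_eq', ← sum_filter, ← ht]
  simp

theorem pos_of_pivot_lt (h : IsEdgePair v x z a b) {k : Fin d} (hy : y ∈ ZeroOne d)
    (hkb : k < b) (hyk : y k = 0) (hvk : v k = 1) (hyv : ∀ i, k < i → y i = v i) :
    0 < ∑ i, edgeWeight v x z a b i * (x i - y i) := by
  obtain ⟨i₀, hki₀, hi₀b, hxi₀, hvi₀⟩ := h.exists_one k hkb hvk
  have hyi₀ : y i₀ = 0 :=
    hki₀.eq_or_lt.elim (fun e => e ▸ hyk) fun hk => (hyv i₀ hk).trans (hvi₀ hk)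
  have hyb : y b = 1 := (hyv b hkb).trans h.v_b
  have hnonneg : ∀ i ∈ univ, i ∉ ({i₀, b} : Finset (Fin d)) →
      0 ≤ edgeWeight v x z a b i * (x i - y i) := fun i _ hi => by
    rcases lt_trichotomy i b with hib | rfl | hbi
    · exact (h.signAgree_x i hib).mul_sub_nonneg (hy i)
    · simp at hi
    · rw [h.x_of_gt i hbi, hyv i (hkb.trans hbi), sub_self, mul_zero]
  calc 0 < (4 * 1 - 1) * (1 - 0) + 2 * (0 - 1) := by norm_num
    _ = ∑ i ∈ {i₀, b}, edgeWeight v x z a b i * (x i - y i) := by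
      rw [sum_pair hi₀b.ne, edgeWeight_of_lt hi₀b, edgeWeight_right, hxi₀, hyi₀, h.x_b, hyb]
    _ ≤ _ := sum_le_sum_of_subset_of_nonneg (subset_univ _) hnonneg

theorem lt_or_eq_of_mem_Xset (h : IsEdgePair v x z a b) (hy : y ∈ Xset v) :
    ∑ i, edgeWeight v x z a b i * y i < ∑ i, edgeWeight v x z a b i * x i ∨ y = x ∨ y = z := by
  have hdiff : ∀ u : Fin d → ℝ, ∑ i, edgeWeight v x z a b i * (u i - y i) =
      ∑ i, edgeWeight v x z a b i * u i - ∑ i, edgeWeight v x z a b i * y i := fun u => by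
    simp only [mul_sub, sum_sub_distrib]
  have hzx := h.sum_edgeWeight_mul_sub_eq_zero
  simp only [mul_sub, sum_sub_distrib, sub_eq_zero] at hzx
  rw [← sub_pos, ← hdiff]
  obtain ⟨k, hyk, hvk, hyv⟩ := exists_pivot_of_mem_Xset h.zeroOne_v hy
  rcases lt_trichotomy k b with hkb | rfl | hbk
  · exact Or.inl (h.pos_of_pivot_lt hy.1 hkb hyk hvk hyv)
  · refine (pos_sum_mul_sub_or_eq hy.1 h.signAgree_x fun i hi => ?_).imp_right Or.inl
    rcases hi.eq_or_lt with rfl | hki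
    exacts [hyk.trans h.x_b.symm, (hyv i hki).trans (h.x_of_gt i hki).symm]
  by_cases hka : k = a
  · subst hka
    rw [hdiff, ← hzx, ← hdiff]
    refine (pos_sum_mul_sub_or_eq hy.1 h.signAgree_z fun i hi => ?_).imp_right Or.inr
    rcases hi.eq_or_lt with rfl | hki
    exacts [hyk.trans h.z_a.symm, (hyv i hki).trans (h.z_of_gt i hki).symm]
  · refine Or.inl (lt_of_lt_of_le (by positivity) (le_sum_mul_sub_of_dominant
      h.abs_edgeWeight_le h.zeroOne_x hy.1 ((h.x_of_gt k hbk).trans hvk) hyk ?_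
      fun i hki => (hyv i hki).trans (h.x_of_gt i (hbk.trans hki)).symm))
    rw [edgeWeight_of_gt hbk hka, if_pos hvk]

theorem ne (h : IsEdgePair v x z a b) : x ≠ z := fun e => by
  simpa [e, h.z_b] using h.x_b

theorem isExposed (h : IsEdgePair v x z a b) : IsExposed ℝ (Pset v) (segment ℝ x z) := by
  let l : StrongDual ℝ (Fin d → ℝ) := ∑ i, edgeWeight v x z a b i • ContinuousLinearMap.proj i
  have hl : ∀ u, l u = ∑ i, edgeWeight v x z a b i * u i := fun u => by simp [l]
  have hzx := h.sum_edgeWeight_mul_sub_eq_zero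
  simp only [mul_sub, sum_sub_distrib, sub_eq_zero] at hzx
  refine isExposed_convexHull_segment l ?_ ?_ (by rw [hl, hl, hzx]) fun y hy => ?_
  · exact ⟨h.zeroOne_x, b, by simp [h.x_b, h.v_b], h.x_of_gt⟩
  · exact ⟨h.zeroOne_z, a, by simp [h.z_a, h.v_a], h.z_of_gt⟩
  · rw [hl, hl]
    exact h.lt_or_eq_of_mem_Xset hy

end IsEdgePair

theorem stmt10_general (d : ℕ) (v : Fin d → ℝ) (hv : v ∈ ZeroOne d)
    (w : ℕ)
    (sig : ℕ → Fin d)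
    (hanti : StrictAntiOn sig (Set.Icc 1 w))
    (himg : ∀ j : Fin d, j ∈ Sig v ↔ ∃ q, 1 ≤ q ∧ q ≤ w ∧ sig q = j)
    (p q : ℕ) (hp : 1 ≤ p) (hpq : p < q) (hq : q ≤ w)
    (x : Fin d → ℝ) (hx : x ∈ Block v sig q)
    (hmax : ¬ ∃ i ∈ Sig v, ((i : ℕ) : ℤ) = maxDiff v x (sig q : ℕ))
    (z : Fin d → ℝ) (hzB : z ∈ Block v sig p)
    (hz1 : ∀ i : Fin d, (i : ℕ) < (sig q : ℕ) → z i = x i)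
    (hz2 : z (sig q) = 1)
    (hz3 : ∀ r : ℕ, p < r → r < q → z (sig r) = 1) :
    IsFaceOf (Pset v) (segment ℝ x z) ∧ adim (segment ℝ x z) = 1 := by
  have hpI : p ∈ Set.Icc 1 w := ⟨hp, hpq.le.trans hq⟩
  have hqI : q ∈ Set.Icc 1 w := ⟨hp.trans hpq.le, hq⟩
  have hsig : ∀ r ∈ Set.Icc 1 w, v (sig r) = 1 := fun r hr => by
    simpa [Sig] using (himg (sig r)).2 ⟨r, hr.1, hr.2, rfl⟩
  have h : IsEdgePair v x z (sig p) (sig q) :=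
    { zeroOne_v := hv
      zeroOne_x := hx.1
      zeroOne_z := hzB.1
      lt := hanti hpI hqI hpq
      v_a := hsig p hpI
      v_b := hsig q hqI
      x_b := hx.2.1
      x_of_gt := hx.2.2
      z_a := hzB.2.1
      z_of_gt := hzB.2.2
      z_of_lt := hz1
      z_b := hz2
      z_of_sig := fun i hqi hip hvi => by
        obtain ⟨r, hr1, hrw, rfl⟩ := (himg i).1 (by simp [Sig, hvi])
        exact hz3 r ((hanti.lt_iff_gt ⟨hr1, hrw⟩ hpI).1 hip)
          ((hanti.lt_iff_gt hqI ⟨hr1, hrw⟩).1 hqi)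
      exists_one := fun k hkq hvk => exists_one_of_maxDiff_notMem_sig hv hx.1 hmax hkq hvk }
  exact ⟨⟨convex_segment x z, h.isExposed.isExtreme⟩, adim_segment h.ne⟩

/-- if `x` is a vertex of `P(v)` in block `X_q(v)` with
`max({i < sig_q(v) : x_i ≠ v_i} ∪ {−1}) ∉ Sig(v)`, `1 ≤ p < q ≤ s(v)`,
and `z ∈ X_p(v)` agrees with `x` below `sig_q(v)`, has `z_{sig_q(v)} = 1` and
`z_{sig_r(v)} = 1` for `p < r < q`, then `[x,z]` is an edge of `P(v)`. -/
theorem stmt10 (d : ℕ) (hd : 0 < d) (v : Fin d → ℝ) (hv : v ∈ ZeroOne d) (hv0 : v ≠ 0)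
    (w : ℕ) (hw : w = (Sig v).card)
    (sig : ℕ → Fin d)
    (hanti : StrictAntiOn sig (Set.Icc 1 w))
    (himg : ∀ j : Fin d, j ∈ Sig v ↔ ∃ q, 1 ≤ q ∧ q ≤ w ∧ sig q = j)
    (p q : ℕ) (hp : 1 ≤ p) (hpq : p < q) (hq : q ≤ w)
    (x : Fin d → ℝ) (hx : x ∈ Block v sig q)
    (hmax : ¬ ∃ i ∈ Sig v, ((i : ℕ) : ℤ) = maxDiff v x (sig q : ℕ))
    (z : Fin d → ℝ) (hzB : z ∈ Block v sig p)
    (hz1 : ∀ i : Fin d, (i : ℕ) < (sig q : ℕ) → z i = x i)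
    (hz2 : z (sig q) = 1)
    (hz3 : ∀ r : ℕ, p < r → r < q → z (sig r) = 1) :
    IsFaceOf (Pset v) (segment ℝ x z) ∧ adim (segment ℝ x z) = 1 :=
  stmt10_general d v hv w sig hanti himg p q hp hpq hq x hx hmax z hzB hz1 hz2 hz3
end

section
/- Let d be a positive integer and v ∈ {0,1}^d with v ≠ 0, with weight w = s(v) and signature sig_1(v) > … > sig_w(v). Suppose x, y ∈ X(v) are distinct vertices such that the segment [x,y] is an edge of P(v), with x ∈ X_q(v) and y ∈ X_p(v). Then: (1) if p = q, then x and y differ in exactly one coordinate (the edge is a cube edge of the block); (2) if p < q, then y satisfies y_i = x_i for all 0 ≤ i < sig_q(v), y_{sig_r(v)} = 1 for all r with p < r < q, and either y_{sig_q(v)} = 0, or else y_{sig_q(v)} = 1 and max({i ∈ {0,…,sig_q(v)−1} : x_i ≠ v_i} ∪ {−1}) ∉ Sig(v). -/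
/-!
If `a, b ∈ X(v)` satisfy `a + b = x + y`, the common midpoint of `[a, b]` and `[x, y]` lies in
the edge `[x, y]`, so extremality forces `a, b ∈ [x, y]`, and a 0/1-point of `[x, y]` is `x` or
`y`. Swapping one coordinate `j` between `x` and `y` preserves the sum, so whenever both swapped
points stay revlex-below `v`, either `x_j = y_j` or `x` and `y` differ only at `j`. Each assertion
follows by exhibiting a coordinate for which both swaps stay in `X(v)`, while `x` and `y` still
differ elsewhere (at `sig_p(v)` when `p < q`).
-/

open Finset

open Function

theorem update_add_update_swap {ι M : Type*} [DecidableEq ι] [AddCommMagma M] (x y : ι → M)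
    (j : ι) : update x j (y j) + update y j (x j) = x + y := by
  funext k
  rcases eq_or_ne k j with rfl | hkj
  · simp [add_comm]
  · simp [hkj]

theorem IsExtreme.mem_segment_of_add_eq {𝕜 E : Type*} [Field 𝕜] [LinearOrder 𝕜]
    [IsStrictOrderedRing 𝕜] [AddCommGroup E] [Module 𝕜 E] {A : Set E} {x y a b : E}
    (h : IsExtreme 𝕜 A (segment 𝕜 x y)) (ha : a ∈ A) (hb : b ∈ A) (hab : a + b = x + y) :
    a ∈ segment 𝕜 x y := by
  have hmid : (1 / 2 : 𝕜) • a + (1 / 2 : 𝕜) • b = (1 / 2 : 𝕜) • x + (1 / 2 : 𝕜) • y := by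
    rw [← smul_add, ← smul_add, hab]
  exact h.left_mem_of_mem_openSegment ha hb
    ⟨1 / 2, 1 / 2, by norm_num, by norm_num, add_halves 1, rfl⟩
    ⟨1 / 2, 1 / 2, by norm_num, by norm_num, add_halves 1, hmid⟩

namespace ZeroOne

variable {d : ℕ} {x y a : Fin d → ℝ}

theorem update_mem (hx : x ∈ ZeroOne d) (j : Fin d) {c : ℝ} (hc : c = 0 ∨ c = 1) :
    update x j c ∈ ZeroOne d := by
  intro k
  rcases eq_or_ne k j with rfl | hkj
  · simpa using hc
  · simpa [hkj] using hx k

theorem eq_or_eq_of_mem_segment (hx : x ∈ ZeroOne d) (hy : y ∈ ZeroOne d) (ha : a ∈ ZeroOne d)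
    (h : a ∈ segment ℝ x y) : a = x ∨ a = y := by
  rw [segment_eq_image'] at h
  obtain ⟨θ, -, rfl⟩ := h
  by_cases hxy : x = y
  · simp [hxy]
  obtain ⟨i, hi⟩ := Function.ne_iff.mp hxy
  have hθ : θ = 0 ∨ θ = 1 := by
    have hai := ha i
    simp only [Pi.add_apply, Pi.smul_apply, Pi.sub_apply, smul_eq_mul] at hai
    rcases hx i with h1 | h1 <;> rcases hy i with h2 | h2 <;> rw [h1, h2] at hai hi <;>
      norm_num at hi <;> rcases hai with h | h
    all_goals first | (left; linarith) | (right; linarith)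
  rcases hθ with rfl | rfl <;> simp

end ZeroOne

section RevlexInitial

variable {d : ℕ} {v x y a : Fin d → ℝ} {sig : ℕ → Fin d} {p q : ℕ}

theorem mem_Xset_of_apply_eq_zero (ha : a ∈ ZeroOne d) {m : Fin d} (ham : a m = 0)
    (hvm : v m = 1) (habove : ∀ i, m < i → a i = v i) : a ∈ Xset v :=
  ⟨ha, m, by rw [ham, hvm]; exact one_pos, habove⟩

theorem Block_subset_Xset (hvq : v (sig q) = 1) : Block v sig q ⊆ Xset v :=
  fun _ ⟨hx, hxq, habove⟩ => mem_Xset_of_apply_eq_zero hx hxq hvq habove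

theorem update_mem_Block (hx : x ∈ Block v sig q) {j : Fin d} (hj : j < sig q) {c : ℝ}
    (hc : c = 0 ∨ c = 1) : update x j c ∈ Block v sig q := by
  refine ⟨ZeroOne.update_mem hx.1 j hc, by simpa [hj.ne'] using hx.2.1, fun i hi => ?_⟩
  rw [update_of_ne (hj.trans hi).ne']
  exact hx.2.2 i hi

theorem lt_of_mem_Block_of_ne (hx : x ∈ Block v sig q) (hy : y ∈ Block v sig q) {k : Fin d}
    (hk : x k ≠ y k) : k < sig q := by
  by_contra! hle
  rcases hle.eq_or_lt with heq | hlt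
  · exact hk (by rw [← heq, hx.2.1, hy.2.1])
  · exact hk (by rw [hx.2.2 k hlt, hy.2.2 k hlt])

theorem maxDiff_eq_coe {b : ℕ} {i : Fin d} (h : maxDiff v x b = i) :
    (i : ℕ) < b ∧ x i ≠ v i ∧ ∀ k : Fin d, i < k → (k : ℕ) < b → x k = v k := by
  unfold maxDiff at h
  set F := @Finset.filter (Fin d) (fun i => (i : ℕ) < b ∧ x i ≠ v i) (Classical.decPred _) univ
  have hF : ∀ k, k ∈ F ↔ (k : ℕ) < b ∧ x k ≠ v k := fun k =>
    (@Finset.mem_filter _ _ (Classical.decPred _) _ _).trans (and_iff_right (mem_univ k))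
  set S := insert (-1 : ℤ) (F.image (fun i : Fin d => ((i : ℕ) : ℤ)))
  have hmem := Finset.max'_mem S (Finset.insert_nonempty _ _)
  rw [h, Finset.mem_insert, Finset.mem_image] at hmem
  obtain ⟨m, hm, hmi⟩ := hmem.resolve_left (by omega)
  obtain rfl : m = i := Fin.ext (by exact_mod_cast hmi)
  refine ⟨((hF m).mp hm).1, ((hF m).mp hm).2, fun k hik hkb => ?_⟩
  by_contra hk
  have hkS : ((k : ℕ) : ℤ) ∈ S :=
    Finset.mem_insert_of_mem (Finset.mem_image_of_mem _ ((hF k).mpr ⟨hkb, hk⟩))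
  have hki : ((k : ℕ) : ℤ) ≤ m := h ▸ Finset.le_max' S _ hkS
  exact absurd hik (not_lt.mpr (by exact_mod_cast hki))

theorem apply_eq_of_swap_mem_Xset (hface : IsExtreme ℝ (Pset v) (segment ℝ x y))
    (hx : x ∈ ZeroOne d) (hy : y ∈ ZeroOne d) {j k : Fin d} (hkj : k ≠ j) (hk : x k ≠ y k)
    (ha : update x j (y j) ∈ Xset v) (hb : update y j (x j) ∈ Xset v) : x j = y j := by
  have hseg := hface.mem_segment_of_add_eq (subset_convexHull ℝ _ ha) (subset_convexHull ℝ _ hb)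
    (update_add_update_swap x y j)
  rcases ZeroOne.eq_or_eq_of_mem_segment hx hy (ZeroOne.update_mem hx j (hy j)) hseg with h | h
  · simpa using (congrFun h j).symm
  · exact absurd (by simpa [hkj] using congrFun h k) hk

theorem cnt_ne_eq_one_of_mem_Block (hface : IsExtreme ℝ (Pset v) (segment ℝ x y)) (hxy : x ≠ y)
    (hx : x ∈ Block v sig q) (hy : y ∈ Block v sig q) (hvq : v (sig q) = 1) :
    cnt (fun i => x i ≠ y i) = 1 := by
  obtain ⟨i, hi⟩ := Function.ne_iff.mp hxy
  have honly : ∀ j, x j ≠ y j → j = i := by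
    intro j hj
    by_contra hji
    have hjq := lt_of_mem_Block_of_ne hx hy hj
    exact hj (apply_eq_of_swap_mem_Xset hface hx.1 hy.1 (Ne.symm hji) hi
      (Block_subset_Xset hvq (update_mem_Block hx hjq (hy.1 j)))
      (Block_subset_Xset hvq (update_mem_Block hy hjq (hx.1 j))))
  have hF : ∀ j, j ∈ @Finset.filter (Fin d) (fun i => x i ≠ y i) (Classical.decPred _) univ ↔
      x j ≠ y j := fun j =>
    (@Finset.mem_filter _ _ (Classical.decPred _) _ _).trans (and_iff_right (mem_univ j))
  rw [cnt, Finset.card_eq_one]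
  exact ⟨i, Finset.eq_singleton_iff_unique_mem.mpr
    ⟨(hF i).mpr hi, fun j hj => honly j ((hF j).mp hj)⟩⟩

section DifferentBlocks

variable (hface : IsExtreme ℝ (Pset v) (segment ℝ x y)) (hx : x ∈ Block v sig q)
  (hy : y ∈ Block v sig p) (hqp : sig q < sig p) (hvp : v (sig p) = 1)

include hface hx hy hqp hvp

theorem apply_eq_of_update_mem_Xset {j : Fin d} (hj : j < sig p)
    (ha : update x j (y j) ∈ Xset v) : x j = y j :=
  apply_eq_of_swap_mem_Xset hface hx.1 hy.1 hj.ne'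
    (by rw [hx.2.2 _ hqp, hy.2.1, hvp]; exact one_ne_zero) ha
    (Block_subset_Xset hvp (update_mem_Block hy hj (hx.1 j)))

theorem apply_eq_of_lt_sig (hvq : v (sig q) = 1) {i : Fin d} (hi : i < sig q) : y i = x i :=
  (apply_eq_of_update_mem_Xset hface hx hy hqp hvp (hi.trans hqp)
    (Block_subset_Xset hvq (update_mem_Block hx hi (hy.1 i)))).symm

theorem apply_eq_one_of_mem_Ioo {j : Fin d} (hqj : sig q < j) (hjp : j < sig p) (hvj : v j = 1) :
    y j = 1 := by
  refine (hy.1 j).resolve_left fun hyj => ?_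
  have ha : update x j (y j) ∈ Xset v :=
    mem_Xset_of_apply_eq_zero (ZeroOne.update_mem hx.1 j (hy.1 j)) (by simpa using hyj) hvj
      fun i hi => by rw [update_of_ne hi.ne', hx.2.2 i (hqj.trans hi)]
  have hxy := apply_eq_of_update_mem_Xset hface hx hy hqp hvp hjp ha
  rw [hx.2.2 j hqj, hvj, hyj] at hxy
  exact one_ne_zero hxy

theorem not_exists_mem_Sig_eq_maxDiff (hvq : v (sig q) = 1) (hyq : y (sig q) = 1) :
    ¬ ∃ i ∈ Sig v, ((i : ℕ) : ℤ) = maxDiff v x (sig q : ℕ) := by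
  rintro ⟨i, hi, hmax⟩
  obtain ⟨hiq, hxi, hxv⟩ := maxDiff_eq_coe hmax.symm
  have hvi : v i = 1 := (Finset.mem_filter.mp hi).2
  have ha : update x (sig q) (y (sig q)) ∈ Xset v := by
    refine mem_Xset_of_apply_eq_zero (ZeroOne.update_mem hx.1 _ (hy.1 _)) (m := i) ?_ hvi
      fun k hik => ?_
    · rw [update_of_ne (Fin.ne_of_lt hiq)]
      exact (hx.1 i).resolve_right (hvi ▸ hxi)
    · rcases lt_trichotomy k (sig q) with hk | rfl | hk
      · rw [update_of_ne hk.ne, hxv k hik hk]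
      · rw [update_self, hyq, hvq]
      · rw [update_of_ne hk.ne', hx.2.2 k hk]
  have hxy := apply_eq_of_update_mem_Xset hface hx hy hqp hvp hqp ha
  rw [hx.2.1, hyq] at hxy
  exact zero_ne_one hxy

end DifferentBlocks

end RevlexInitial

theorem stmt11_general (d : ℕ) (v : Fin d → ℝ)
    (w : ℕ)
    (sig : ℕ → Fin d)
    (hanti : StrictAntiOn sig (Set.Icc 1 w))
    (himg : ∀ j : Fin d, j ∈ Sig v ↔ ∃ q, 1 ≤ q ∧ q ≤ w ∧ sig q = j)
    (p q : ℕ) (hp1 : 1 ≤ p) (hpw : p ≤ w) (hq1 : 1 ≤ q) (hqw : q ≤ w)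
    (x y : Fin d → ℝ) (hxy : x ≠ y)
    (hx : x ∈ Block v sig q) (hy : y ∈ Block v sig p)
    (hface : IsFaceOf (Pset v) (segment ℝ x y)) :
    (p = q → cnt (fun i : Fin d => x i ≠ y i) = 1) ∧
    (p < q →
      (∀ i : Fin d, (i : ℕ) < (sig q : ℕ) → y i = x i) ∧
      (∀ r : ℕ, p < r → r < q → y (sig r) = 1) ∧
      (y (sig q) = 0 ∨
        (y (sig q) = 1 ∧
          ¬ ∃ i ∈ Sig v, ((i : ℕ) : ℤ) = maxDiff v x (sig q : ℕ)))) := by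
  have hvsig : ∀ r, 1 ≤ r → r ≤ w → v (sig r) = 1 := fun r hr1 hrw =>
    (Finset.mem_filter.mp ((himg _).mpr ⟨r, hr1, hrw, rfl⟩)).2
  have hsig : ∀ {r s : ℕ}, 1 ≤ r → r < s → s ≤ w → sig s < sig r := fun hr1 hrs hsw =>
    hanti ⟨hr1, hrs.le.trans hsw⟩ ⟨hr1.trans hrs.le, hsw⟩ hrs
  refine ⟨?_, fun hpq => ?_⟩
  · rintro rfl
    exact cnt_ne_eq_one_of_mem_Block hface.2 hxy hx hy (hvsig p hp1 hpw)
  have hqp := hsig hp1 hpq hqw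
  have hvp := hvsig p hp1 hpw
  have hvq := hvsig q hq1 hqw
  refine ⟨fun i hi => apply_eq_of_lt_sig hface.2 hx hy hqp hvp hvq hi,
    fun r hpr hrq => ?_,
    (hy.1 (sig q)).imp_right fun hyq =>
      ⟨hyq, not_exists_mem_Sig_eq_maxDiff hface.2 hx hy hqp hvp hvq hyq⟩⟩
  exact apply_eq_one_of_mem_Ioo hface.2 hx hy hqp hvp (hsig (hp1.trans hpr.le) hrq hqw)
    (hsig hp1 hpr (hrq.le.trans hqw)) (hvsig r (hp1.trans hpr.le) (hrq.le.trans hqw))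

/-- every edge `[x,y]` of `P(v)` with `x ∈ X_q(v)`, `y ∈ X_p(v)` is
either a cube edge of a block (case `p = q`) or, for `p < q`, is of the form
described in Theorem 9/10. -/
theorem stmt11 (d : ℕ) (hd : 0 < d) (v : Fin d → ℝ) (hv : v ∈ ZeroOne d) (hv0 : v ≠ 0)
    (w : ℕ) (hw : w = (Sig v).card)
    (sig : ℕ → Fin d)
    (hanti : StrictAntiOn sig (Set.Icc 1 w))
    (himg : ∀ j : Fin d, j ∈ Sig v ↔ ∃ q, 1 ≤ q ∧ q ≤ w ∧ sig q = j)
    (p q : ℕ) (hp1 : 1 ≤ p) (hpw : p ≤ w) (hq1 : 1 ≤ q) (hqw : q ≤ w)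
    (x y : Fin d → ℝ) (hxy : x ≠ y)
    (hx : x ∈ Block v sig q) (hy : y ∈ Block v sig p)
    (hface : IsFaceOf (Pset v) (segment ℝ x y))
    (hdim : adim (segment ℝ x y) = 1) :
    (p = q → cnt (fun i : Fin d => x i ≠ y i) = 1) ∧
    (p < q →
      (∀ i : Fin d, (i : ℕ) < (sig q : ℕ) → y i = x i) ∧
      (∀ r : ℕ, p < r → r < q → y (sig r) = 1) ∧
      (y (sig q) = 0 ∨
        (y (sig q) = 1 ∧
          ¬ ∃ i ∈ Sig v, ((i : ℕ) : ℤ) = maxDiff v x (sig q : ℕ)))) :=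
  stmt11_general d v w sig hanti himg p q hp1 hpw hq1 hqw x y hxy hx hy hface
end

section
/- For every positive integer d and every v ∈ {0,1}^d with v ≠ 0, the graph of the revlex-initial 0/1-polytope P(v) has edge expansion at least one: for every subset S of the vertex set X(v) with 0 < |S| and 2·|S| ≤ |X(v)|, the number of edges of P(v) having exactly one endpoint in S is at least |S|. -/
open Finset

/-!
Binary expansion identifies `X(v)` with an initial segment `{0, …, N - 1}` of `ℕ`: the points are
`bitVec d n` for `n < N`, and the revlex order becomes the order of `ℕ`. If bit `j` of `m` is zero,
the points of `m` and `m + 2 ^ j` differ in coordinate `j` only; the segment between them is an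
extreme subset of the unit cube, hence an edge of `P(v)` as soon as both endpoints lie in `X(v)`.
It therefore suffices to show that in the hypercube graph induced on `{0, …, N - 1}` every `S` has
at least `min |S| (N - |S|)` boundary edges. This goes by strong induction on `N`, splitting by the
lowest bit: the even and the odd numbers form copies of the initial segments of lengths
`⌈N / 2⌉` and `⌊N / 2⌋`, joined by the matching `2k — 2k + 1`. The boundary of `S` contains the
boundaries of its two halves together with the matching edges crossing `S`, and the number of the
latter bounds the difference between the sizes of the two halves.
-/

section CubeBoundary

/-- The edges `{m, m + 2 ^ j}` (bit `j` of `m` zero) of the hypercube graph on `{0, …, N - 1}`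
with exactly one endpoint in `S`, encoded as `(m, j)`. -/
def cubeBoundary (N : ℕ) (S : Finset ℕ) : Finset (ℕ × ℕ) :=
  (range N ×ˢ range N).filter fun p =>
    p.1 + 2 ^ p.2 < N ∧ p.1.testBit p.2 = false ∧ (p.1 ∈ S ↔ p.1 + 2 ^ p.2 ∉ S)

@[simp]
lemma mem_cubeBoundary {N m j : ℕ} {S : Finset ℕ} :
    (m, j) ∈ cubeBoundary N S ↔
      m + 2 ^ j < N ∧ m.testBit j = false ∧ (m ∈ S ↔ m + 2 ^ j ∉ S) := by
  have := j.lt_two_pow_self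
  simp only [cubeBoundary, mem_filter, mem_product, mem_range]
  exact ⟨fun h => h.2, fun h => ⟨⟨by omega, by omega⟩, h⟩⟩

def half (S : Finset ℕ) (r : ℕ) : Finset ℕ :=
  (S.filter (· % 2 = r)).image (· / 2)

lemma mem_half {S : Finset ℕ} {r k : ℕ} (hr : r < 2) : k ∈ half S r ↔ 2 * k + r ∈ S := by
  simp only [half, mem_image, mem_filter]
  constructor
  · rintro ⟨m, ⟨hm, rfl⟩, rfl⟩
    rwa [Nat.div_add_mod]
  · exact fun h => ⟨2 * k + r, ⟨h, by omega⟩, by omega⟩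

lemma card_half_add_card_half (S : Finset ℕ) : #(half S 0) + #(half S 1) = #S := by
  have hcard : ∀ r, #(half S r) = #(S.filter (· % 2 = r)) := fun r =>
    card_image_of_injOn fun m hm m' hm' h => by
      simp only [coe_filter, Set.mem_ofPred_eq] at hm hm' h
      omega
  rw [hcard, hcard, ← card_filter_add_card_filter_not (s := S) (· % 2 = 0)]
  congr 2
  exact filter_congr fun m _ => by omega

lemma half_subset_range {N r : ℕ} {S : Finset ℕ} (hS : S ⊆ range N) (hr : r < 2) :
    half S r ⊆ range ((N + 1 - r) / 2) := fun k hk => by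
  have := mem_range.1 (hS ((mem_half hr).1 hk))
  rw [mem_range]
  omega

/-- The edges `{2k, 2k + 1}` of direction `0` that cross `S`, indexed by `k`. -/
def lowBoundary (N : ℕ) (S : Finset ℕ) : Finset ℕ :=
  (range (N / 2)).filter fun k => (2 * k ∈ S ↔ 2 * k + 1 ∉ S)

lemma mem_cubeBoundary_of_mem_half {N M r m j : ℕ} {S : Finset ℕ} (hr : r < 2)
    (hM : 2 * M + r ≤ N + 1) (h : (m, j) ∈ cubeBoundary M (half S r)) :
    (2 * m + r, j + 1) ∈ cubeBoundary N S := by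
  rw [mem_cubeBoundary, mem_half hr, mem_half hr] at h
  obtain ⟨hlt, hbit, hS⟩ := h
  have hpow : 2 ^ (j + 1) = 2 * 2 ^ j := pow_succ' 2 j
  refine mem_cubeBoundary.2 ⟨by omega, ?_, ?_⟩
  · rwa [Nat.testBit_add_one, show (2 * m + r) / 2 = m by omega]
  · rwa [show 2 * m + r + 2 ^ (j + 1) = 2 * (m + 2 ^ j) + r by omega]

lemma mem_cubeBoundary_of_mem_lowBoundary {N k : ℕ} {S : Finset ℕ}
    (hk : k ∈ lowBoundary N S) : (2 * k, 0) ∈ cubeBoundary N S := by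
  simp only [lowBoundary, mem_filter, mem_range] at hk
  simp only [mem_cubeBoundary, pow_zero, Nat.testBit_zero]
  exact ⟨by omega, by simp, hk.2⟩

lemma card_cubeBoundary_half_add_le {N : ℕ} {S : Finset ℕ} :
    #(cubeBoundary ((N + 1) / 2) (half S 0)) + #(cubeBoundary (N / 2) (half S 1)) +
      #(lowBoundary N S) ≤ #(cubeBoundary N S) := by
  let lift : ℕ → ℕ × ℕ → ℕ × ℕ := fun r p => (2 * p.1 + r, p.2 + 1)
  have lift_inj : ∀ r, Function.Injective (lift r) := fun r p q h => by
    simp only [lift, Prod.mk.injEq] at h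
    exact Prod.ext (by omega) (by omega)
  have low_inj : Function.Injective fun k : ℕ => (2 * k, 0) := fun k k' h => by
    simp only [Prod.mk.injEq] at h
    omega
  rw [← card_image_of_injective (cubeBoundary _ _) (lift_inj 0),
    ← card_image_of_injective (cubeBoundary (N / 2) _) (lift_inj 1),
    ← card_image_of_injective _ low_inj, ← card_union_of_disjoint, ← card_union_of_disjoint]
  · refine card_le_card fun q hq => ?_
    simp only [mem_union, mem_image] at hq
    rcases hq with (⟨⟨m, j⟩, h, rfl⟩ | ⟨⟨m, j⟩, h, rfl⟩) | ⟨k, hk, rfl⟩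
    · exact mem_cubeBoundary_of_mem_half (by norm_num) (by omega) h
    · exact mem_cubeBoundary_of_mem_half (by norm_num) (by omega) h
    · exact mem_cubeBoundary_of_mem_lowBoundary hk
  · simp only [disjoint_left, mem_union, mem_image, not_exists, not_and]
    rintro _ (⟨p, -, rfl⟩ | ⟨p, -, rfl⟩) k - h <;> simp [lift] at h
  · simp only [disjoint_left, mem_image, not_exists, not_and]
    rintro _ ⟨p, -, rfl⟩ q - h
    simp only [lift, Prod.mk.injEq] at h
    omega

lemma card_half_one_le {N : ℕ} {S : Finset ℕ} (hS : S ⊆ range N) :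
    #(half S 1) ≤ #(half S 0) + #(lowBoundary N S) := by
  refine (card_le_card fun k hk => ?_).trans (card_union_le _ _)
  have hk' := (mem_half (by norm_num)).1 hk
  have := mem_range.1 (hS hk')
  simp only [mem_union, lowBoundary, mem_filter, mem_range, mem_half (show 0 < 2 by norm_num)]
  by_cases h : 2 * k + 0 ∈ S
  · exact .inl h
  · exact .inr ⟨by omega, by simp_all⟩

lemma card_half_zero_le {N : ℕ} {S : Finset ℕ} (hS : S ⊆ range N) :
    #(half S 0) ≤ #(half S 1) + #(lowBoundary N S) + ((N + 1) / 2 - N / 2) := by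
  rw [← Nat.card_Ico (N / 2) ((N + 1) / 2)]
  refine (card_le_card fun k hk => ?_).trans
    ((card_union_le _ _).trans (add_le_add_left (card_union_le _ _) _))
  have hk' := (mem_half (by norm_num)).1 hk
  have := mem_range.1 (hS hk')
  simp only [mem_union, lowBoundary, mem_filter, mem_range, mem_Ico,
    mem_half (show 1 < 2 by norm_num)]
  by_cases h : 2 * k + 1 ∈ S
  · exact .inl (.inl h)
  · by_cases hk : k < N / 2
    · exact .inl (.inr ⟨hk, by simp_all⟩)
    · exact .inr ⟨by omega, by omega⟩

theorem min_card_le_card_cubeBoundary (N : ℕ) (S : Finset ℕ) (hS : S ⊆ range N) :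
    min #S (N - #S) ≤ #(cubeBoundary N S) := by
  induction N using Nat.strong_induction_on generalizing S with
  | _ N ih =>
  have hSN : #S ≤ N := by simpa using card_le_card hS
  obtain hN | hN := lt_or_ge N 2
  · omega
  have hE := ih ((N + 1) / 2) (by omega) (half S 0)
    (by simpa using half_subset_range hS (r := 0) (by norm_num))
  have hO := ih (N / 2) (by omega) (half S 1)
    (by simpa using half_subset_range hS (r := 1) (by norm_num))
  have hsplit := card_half_add_card_half S
  have hbdry := card_cubeBoundary_half_add_le (N := N) (S := S)
  have hone := card_half_one_le hS
  have hzero := card_half_zero_le hS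
  -- These constraints are invariant under replacing `S` by `range N \ S`, so no reduction to
  -- `2 * #S ≤ N` is needed.
  omega

end CubeBoundary

section BitVectors

lemma Nat.testBit_add_two_pow {m j : ℕ} (hm : m.testBit j = false) (i : ℕ) :
    (m + 2 ^ j).testBit i = (m.testBit i || decide (i = j)) := by
  induction j generalizing m i with
  | zero =>
    have hm2 : m % 2 = 0 := by simpa using hm
    cases i with
    | zero =>
      simp only [pow_zero, Nat.testBit_zero, decide_true, Bool.or_true, decide_eq_true_eq]
      omega
    | succ i =>
      rw [Nat.testBit_add_one, Nat.testBit_add_one, show (m + 2 ^ 0) / 2 = m / 2 by omega]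
      simp
  | succ j ih =>
    have hpow : 2 ^ (j + 1) = 2 * 2 ^ j := by ring
    cases i with
    | zero =>
      simp only [Nat.testBit_zero, Nat.right_eq_add, Nat.add_eq_zero_iff, one_ne_zero, and_false,
        decide_false, Bool.or_false, decide_eq_decide]
      omega
    | succ i =>
      rw [Nat.testBit_add_one] at hm
      rw [Nat.testBit_add_one, Nat.testBit_add_one, show (m + 2 ^ (j + 1)) / 2 = m / 2 + 2 ^ j by
        omega, ih hm]
      simp

noncomputable def bitVec (d n : ℕ) : Fin d → ℝ := fun i => if n.testBit i then 1 else 0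

lemma bitVec_mem_zeroOne (d n : ℕ) : bitVec d n ∈ ZeroOne d := fun i => by
  unfold bitVec
  split_ifs <;> simp

lemma bitVec_add_two_pow {d m : ℕ} {j : Fin d} (hm : m.testBit j = false) :
    bitVec d (m + 2 ^ (j : ℕ)) = Function.update (bitVec d m) j 1 := by
  funext i
  rcases eq_or_ne i j with rfl | hij
  · simp [bitVec, Nat.testBit_add_two_pow hm]
  · simp [bitVec, Nat.testBit_add_two_pow hm, hij, Fin.val_ne_of_ne hij]

lemma bitVec_apply_eq_zero {d m : ℕ} {j : Fin d} (hm : m.testBit j = false) :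
    bitVec d m j = 0 := by
  simp [bitVec, hm]

lemma bitVec_apply_eq_iff {d m n : ℕ} {i : Fin d} :
    bitVec d m i = bitVec d n i ↔ m.testBit i = n.testBit i := by
  simp only [bitVec]
  cases m.testBit i <;> cases n.testBit i <;> norm_num

lemma Nat.testBit_eq_of_lt_two_pow {d m n i : ℕ} (hm : m < 2 ^ d) (hn : n < 2 ^ d)
    (hi : d ≤ i) : m.testBit i = n.testBit i := by
  have hpow := Nat.pow_le_pow_right (show 0 < 2 by norm_num) hi
  rw [Nat.testBit_lt_two_pow (hm.trans_le hpow), Nat.testBit_lt_two_pow (hn.trans_le hpow)]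

lemma bitVec_injOn (d : ℕ) : Set.InjOn (bitVec d) (Set.Iio (2 ^ d)) := by
  intro m hm n hn h
  refine Nat.eq_of_testBit_eq fun i => ?_
  obtain hi | hi := lt_or_ge i d
  · exact bitVec_apply_eq_iff.1 (congrFun h ⟨i, hi⟩)
  · exact Nat.testBit_eq_of_lt_two_pow hm hn hi

lemma exists_bitVec_eq {d : ℕ} {x : Fin d → ℝ} (hx : x ∈ ZeroOne d) :
    ∃ n < 2 ^ d, bitVec d n = x := by
  classical
  set s : Finset ℕ := (univ.filter (x · = 1)).map Fin.valEmbedding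
  have hbit : ∀ i, (∑ i ∈ s, 2 ^ i).testBit i ↔ i ∈ s := fun i => by
    rw [← Nat.mem_bitIndices, ← List.mem_toFinset, Finset.toFinset_bitIndices_sum_two_pow]
  refine ⟨∑ i ∈ s, 2 ^ i, Nat.lt_pow_two_of_testBit _ fun i hi => ?_, funext fun i => ?_⟩
  · rw [← Bool.not_eq_true, hbit]
    simp only [mem_map, mem_filter, mem_univ, true_and, Fin.valEmbedding_apply, not_exists,
      not_and, s]
    omega
  · simp only [bitVec, hbit]
    rcases hx i with h | h <;> simp [s, h, Fin.val_inj]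

lemma RlexLt.lt_of_bitVec {d m n : ℕ} (hm : m < 2 ^ d) (hn : n < 2 ^ d)
    (h : RlexLt (bitVec d m) (bitVec d n)) : m < n := by
  obtain ⟨k, hk, hgt⟩ := h
  have hbits : m.testBit k = false ∧ n.testBit k = true := by
    simp only [bitVec] at hk
    split_ifs at hk <;> norm_num at hk
    simp_all
  refine Nat.lt_of_testBit k hbits.1 hbits.2 fun i hi => ?_
  obtain hid | hid := lt_or_ge i d
  · exact bitVec_apply_eq_iff.1 (hgt ⟨i, hid⟩ hi)
  · exact Nat.testBit_eq_of_lt_two_pow hm hn hid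

lemma rlexLt_or_rlexLt_of_ne {d : ℕ} {x y : Fin d → ℝ} (h : x ≠ y) :
    RlexLt x y ∨ RlexLt y x := by
  classical
  have hne : (univ.filter fun i => x i ≠ y i).Nonempty := by
    simpa [Finset.filter_nonempty_iff, funext_iff] using h
  obtain ⟨m, hm, hmax⟩ := exists_max_image _ id hne
  have heq : ∀ i, m < i → x i = y i := fun i hi => by
    by_contra hxy
    exact absurd (hmax i (by simpa using hxy)) (not_le.2 hi)
  rcases lt_or_gt_of_ne (mem_filter.1 hm).2 with hlt | hlt
  · exact .inl ⟨m, hlt, heq⟩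
  · exact .inr ⟨m, hlt, fun i hi => (heq i hi).symm⟩

lemma rlexLt_bitVec_iff {d m n : ℕ} (hm : m < 2 ^ d) (hn : n < 2 ^ d) :
    RlexLt (bitVec d m) (bitVec d n) ↔ m < n := by
  refine ⟨RlexLt.lt_of_bitVec hm hn, fun hmn => ?_⟩
  have hne : bitVec d m ≠ bitVec d n := fun h => hmn.ne (bitVec_injOn d hm hn h)
  exact (rlexLt_or_rlexLt_of_ne hne).resolve_right
    fun h => (RlexLt.lt_of_bitVec hn hm h).not_gt hmn

lemma Xset_bitVec {d N : ℕ} (hN : N < 2 ^ d) : Xset (bitVec d N) = bitVec d '' Set.Iio N := by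
  ext x
  constructor
  · rintro ⟨hx, hlt⟩
    obtain ⟨n, hn, rfl⟩ := exists_bitVec_eq hx
    exact ⟨n, (rlexLt_bitVec_iff hn hN).1 hlt, rfl⟩
  · rintro ⟨n, hn, rfl⟩
    exact ⟨bitVec_mem_zeroOne d n, (rlexLt_bitVec_iff (hn.trans hN) hN).2 hn⟩

end BitVectors

lemma IsExtreme.univ_pi {𝕜 ι : Type*} {M : ι → Type*} [Semiring 𝕜] [PartialOrder 𝕜]
    [∀ i, AddCommMonoid (M i)] [∀ i, Module 𝕜 (M i)] {A B : ∀ i, Set (M i)}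
    (h : ∀ i, IsExtreme 𝕜 (A i) (B i)) : IsExtreme 𝕜 (Set.univ.pi A) (Set.univ.pi B) := by
  refine ⟨Set.pi_mono fun i _ => (h i).1, fun x₁ hx₁ x₂ hx₂ x hx hx₁₂ => ?_⟩
  have hseg : ∀ i, x i ∈ openSegment 𝕜 (x₁ i) (x₂ i) := by
    obtain ⟨a, b, ha, hb, hab, rfl⟩ := hx₁₂
    exact fun i => ⟨a, b, ha, hb, hab, rfl⟩
  simp only [Set.mem_univ_pi] at hx₁ hx₂ hx ⊢
  exact fun i => (h i).2 (hx₁ i) (hx₂ i) (hx i) (hseg i)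

section Geometry

variable {𝕜 E : Type*} [Field 𝕜] [LinearOrder 𝕜] [IsStrictOrderedRing 𝕜] [AddCommGroup E]
  [Module 𝕜 E]

lemma left_mem_extremePoints_segment (a b : E) : a ∈ (segment 𝕜 a b).extremePoints 𝕜 := by
  rcases eq_or_ne a b with rfl | hab
  · simp [segment_same]
  refine ((convex_segment a b).mem_extremePoints_iff_convex_sdiff).2 ⟨left_mem_segment 𝕜 a b, ?_⟩
  have ha : ({a} : Set E) = AffineMap.lineMap a b '' {(0 : 𝕜)} := by simp
  rw [segment_eq_image_lineMap, ha, ← Set.image_sdiff (AffineMap.lineMap_injective 𝕜 hab),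
    Set.Icc_sdiff_left]
  exact (convex_Ioc 0 1).affine_image _

lemma extremePoints_segment (a b : E) : (segment 𝕜 a b).extremePoints 𝕜 = {a, b} := by
  refine subset_antisymm (convexHull_pair (𝕜 := 𝕜) a b ▸ extremePoints_convexHull_subset) ?_
  rintro x (rfl | rfl)
  · exact left_mem_extremePoints_segment x b
  · exact segment_symm 𝕜 a x ▸ left_mem_extremePoints_segment x a

end Geometry

section Polytope

variable {d : ℕ}

lemma segment_update_eq_pi {x : Fin d → ℝ} {j : Fin d} (hxj : x j = 0) :
    segment ℝ x (Function.update x j 1) =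
      Set.univ.pi (Function.update (fun i => {x i}) j (Set.Icc 0 1)) := by
  ext p
  simp only [segment_eq_image, Set.mem_image, Set.mem_univ_pi]
  constructor
  · rintro ⟨θ, hθ, rfl⟩ i
    rcases eq_or_ne i j with rfl | hij
    · simpa [hxj] using hθ
    · simp only [Function.update_of_ne hij, Pi.add_apply, Pi.smul_apply, smul_eq_mul,
        Set.mem_singleton_iff]
      ring
  · intro hp
    refine ⟨p j, by simpa using hp j, funext fun i => ?_⟩
    rcases eq_or_ne i j with rfl | hij
    · simp [hxj]
    · have := hp i
      simp only [Function.update_of_ne hij, Set.mem_singleton_iff] at this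
      simp only [Pi.add_apply, Pi.smul_apply, smul_eq_mul, Function.update_of_ne hij, this]
      ring

lemma isExtreme_Icc_segment_update {x : Fin d → ℝ} (hx : x ∈ ZeroOne d) {j : Fin d}
    (hxj : x j = 0) : IsExtreme ℝ (Set.Icc 0 1) (segment ℝ x (Function.update x j 1)) := by
  rw [segment_update_eq_pi hxj, ← Set.pi_univ_Icc]
  refine IsExtreme.univ_pi fun i => ?_
  rcases eq_or_ne i j with rfl | hij
  · simpa using IsExtreme.rfl
  · rw [Function.update_of_ne hij, isExtreme_singleton, Pi.zero_apply, Pi.one_apply,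
      Set.extremePoints_Icc zero_le_one]
    exact hx i

lemma Pset_subset_Icc (v : Fin d → ℝ) : Pset v ⊆ Set.Icc 0 1 := by
  refine convexHull_min (fun _ hx => ⟨fun i => ?_, fun i => ?_⟩) (convex_Icc 0 1) <;>
    rcases hx.1 i with h | h <;> simp [h]

lemma isFaceOf_segment_update {v x : Fin d → ℝ} {j : Fin d} (hx : x ∈ Xset v) (hxj : x j = 0)
    (hy : Function.update x j 1 ∈ Xset v) :
    IsFaceOf (Pset v) (segment ℝ x (Function.update x j 1)) :=
  ⟨convex_segment _ _, (isExtreme_Icc_segment_update hx.1 hxj).mono (Pset_subset_Icc v)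
    ((convex_convexHull ℝ _).segment_subset (subset_convexHull ℝ _ hx)
      (subset_convexHull ℝ _ hy))⟩

lemma adim_segment_s14 {a b : Fin d → ℝ} (hab : a ≠ b) : adim (segment ℝ a b) = 1 := by
  rw [adim, ← convexHull_pair, affineSpan_convexHull, direction_affineSpan, vectorSpan_pair]
  exact finrank_span_singleton (vsub_ne_zero.2 hab)

lemma zeroOne_finite (d : ℕ) : (ZeroOne d).Finite :=
  (Set.Finite.pi fun _ => Set.toFinite {(0 : ℝ), 1}).subset fun _ hx i _ => hx i

def crossingEdges (v : Fin d → ℝ) (S : Set (Fin d → ℝ)) : Set (Set (Fin d → ℝ)) :=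
  {e | ∃ a b : Fin d → ℝ, e = segment ℝ a b ∧ IsFaceOf (Pset v) e ∧ adim e = 1 ∧
    ((a ∈ S ∧ b ∉ S) ∨ (a ∉ S ∧ b ∈ S))}

lemma crossingEdges_finite (v : Fin d → ℝ) (S : Set (Fin d → ℝ)) :
    (crossingEdges v S).Finite := by
  have hX : (Xset v).Finite := (zeroOne_finite d).subset fun x hx => hx.1
  refine ((hX.prod hX).image fun p => segment ℝ p.1 p.2).subset ?_
  rintro e ⟨a, b, rfl, ⟨-, hext⟩, -⟩
  have hvert : ∀ {a b}, IsExtreme ℝ (Pset v) (segment ℝ a b) → a ∈ Xset v := fun h =>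
    extremePoints_convexHull_subset
      (h.extremePoints_subset_extremePoints (left_mem_extremePoints_segment _ _))
  exact ⟨(a, b), ⟨hvert hext, hvert (segment_symm ℝ a b ▸ hext)⟩, rfl⟩

end Polytope

section Assembly

variable {d N : ℕ}

lemma segment_bitVec_mem_crossingEdges {S : Set (Fin d → ℝ)} {T : Finset ℕ} {m j : ℕ}
    (hN : N < 2 ^ d) (hST : ∀ n < N, bitVec d n ∈ S ↔ n ∈ T)
    (h : (m, j) ∈ cubeBoundary N T) :
    segment ℝ (bitVec d m) (bitVec d (m + 2 ^ j)) ∈ crossingEdges (bitVec d N) S := by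
  obtain ⟨hlt, hbit, hT⟩ := mem_cubeBoundary.1 h
  have hpow : 0 < 2 ^ j := Nat.two_pow_pos j
  have hX : ∀ n < N, bitVec d n ∈ Xset (bitVec d N) := fun n hn => by
    rw [Xset_bitVec hN]
    exact ⟨n, hn, rfl⟩
  have hj : j < d := (Nat.pow_lt_pow_iff_right (a := 2) (by norm_num)).1 (by omega)
  lift j to Fin d using hj
  have hy := hX _ hlt
  have hne : bitVec d m ≠ bitVec d (m + 2 ^ (j : ℕ)) := fun h =>
    (bitVec_injOn d (show m < 2 ^ d by omega) (show m + 2 ^ (j : ℕ) < 2 ^ d by omega) h).not_lt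
      (by omega)
  refine ⟨_, _, rfl, ?_, adim_segment_s14 hne, ?_⟩
  · rw [bitVec_add_two_pow hbit] at hy ⊢
    exact isFaceOf_segment_update (hX m (by omega)) (bitVec_apply_eq_zero hbit) hy
  · rw [hST m (by omega), hST _ hlt]
    tauto

lemma injOn_segment_bitVec (hN : N ≤ 2 ^ d) (T : Finset ℕ) :
    Set.InjOn (fun p : ℕ × ℕ => segment ℝ (bitVec d p.1) (bitVec d (p.1 + 2 ^ p.2)))
      (cubeBoundary N T) := by
  rintro ⟨m, j⟩ hp ⟨m', j'⟩ hp' h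
  obtain ⟨hlt, -⟩ := mem_cubeBoundary.1 hp
  obtain ⟨hlt', -⟩ := mem_cubeBoundary.1 hp'
  have hpow := Nat.two_pow_pos j
  have hpow' := Nat.two_pow_pos j'
  have hends := congrArg (Set.extremePoints ℝ) h
  simp only [extremePoints_segment, Set.pair_eq_pair_iff] at hends
  have hinj : ∀ {n n'}, n < N → n' < N → bitVec d n = bitVec d n' → n = n' :=
    fun hn hn' => bitVec_injOn d (hn.trans_le hN) (hn'.trans_le hN)
  rcases hends with ⟨h1, h2⟩ | ⟨h1, h2⟩
  · have e1 := hinj (by omega) (by omega) h1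
    have e2 := hinj hlt hlt' h2
    simp only [Prod.mk.injEq]
    exact ⟨e1, Nat.pow_right_injective le_rfl (show 2 ^ j = 2 ^ j' by omega)⟩
  · have e1 := hinj (by omega) hlt' h1
    have e2 := hinj hlt (by omega) h2
    omega

lemma card_cubeBoundary_le_ncard_crossingEdges {S : Set (Fin d → ℝ)} {T : Finset ℕ}
    (hN : N < 2 ^ d) (hST : ∀ n < N, bitVec d n ∈ S ↔ n ∈ T) :
    #(cubeBoundary N T) ≤ (crossingEdges (bitVec d N) S).ncard := by
  rw [← Set.ncard_coe_finset]
  exact Set.ncard_le_ncard_of_injOn _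
    (fun p hp => segment_bitVec_mem_crossingEdges hN hST hp) (injOn_segment_bitVec hN.le T)
    (crossingEdges_finite _ _)

lemma ncard_image_bitVec (hN : N ≤ 2 ^ d) {T : Finset ℕ} (hT : T ⊆ range N) :
    (bitVec d '' T).ncard = #T := by
  refine ((bitVec_injOn d).mono fun n hn => ?_).ncard_image.trans (Set.ncard_coe_finset T)
  have := mem_range.1 (hT hn)
  rw [Set.mem_Iio]
  omega

end Assembly

theorem stmt14_general (d : ℕ) (v : Fin d → ℝ) (hv : v ∈ ZeroOne d)
    (S : Set (Fin d → ℝ)) (hS : S ⊆ Xset v)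
    (hS2 : 2 * S.ncard ≤ (Xset v).ncard) :
    S.ncard ≤ Set.ncard {e : Set (Fin d → ℝ) | ∃ a b : Fin d → ℝ,
      e = segment ℝ a b ∧ IsFaceOf (Pset v) e ∧ adim e = 1 ∧
      ((a ∈ S ∧ b ∉ S) ∨ (a ∉ S ∧ b ∈ S))} := by
  classical
  obtain ⟨N, hN, rfl⟩ := exists_bitVec_eq hv
  have hX : Xset (bitVec d N) = bitVec d '' (range N : Finset ℕ) := by
    rw [Xset_bitVec hN, coe_range]
  set T := (range N).filter (bitVec d · ∈ S)
  have hST : ∀ n < N, bitVec d n ∈ S ↔ n ∈ T := fun n hn => by simp [T, hn]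
  have hSeq : S = bitVec d '' T := by
    refine subset_antisymm (fun x hx => ?_)
      (Set.image_subset_iff.2 fun n hn => (mem_filter.1 hn).2)
    obtain ⟨n, hn, rfl⟩ := hX ▸ hS hx
    exact ⟨n, (hST n (mem_range.1 hn)).1 hx, rfl⟩
  have hcard : S.ncard = #T := hSeq ▸ ncard_image_bitVec hN.le (filter_subset _ _)
  rw [hX, ncard_image_bitVec hN.le subset_rfl, card_range] at hS2
  have hmin := min_card_le_card_cubeBoundary N T (filter_subset _ _)
  calc S.ncard = #T := hcard
    _ ≤ #(cubeBoundary N T) := by omega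
    _ ≤ (crossingEdges (bitVec d N) S).ncard := card_cubeBoundary_le_ncard_crossingEdges hN hST

/-- the graph of `P(v)` has edge expansion at least one: for every
`S ⊆ X(v)` with `0 < |S|` and `2|S| ≤ |X(v)|`, at least `|S|` edges of `P(v)`
have exactly one endpoint in `S`. -/
theorem stmt14 (d : ℕ) (hd : 0 < d) (v : Fin d → ℝ) (hv : v ∈ ZeroOne d) (hv0 : v ≠ 0)
    (S : Set (Fin d → ℝ)) (hS : S ⊆ Xset v) (hS0 : 0 < S.ncard)
    (hS2 : 2 * S.ncard ≤ (Xset v).ncard) :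
    S.ncard ≤ Set.ncard {e : Set (Fin d → ℝ) | ∃ a b : Fin d → ℝ,
      e = segment ℝ a b ∧ IsFaceOf (Pset v) e ∧ adim e = 1 ∧
      ((a ∈ S ∧ b ∉ S) ∨ (a ∉ S ∧ b ∈ S))} :=
  stmt14_general d v hv S hS hS2
end
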